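/- arXiv:1705.05918 — 14 statements merged into one kernel-verified Lean document; each statement's English description precedes it below -/
import Mathlib

section
/- For every pair (x, z) in H_B and every permutation τ of {1,…,n}, the polymatroid inequality holds: √σ + ∑_{k=1}^n π^σ_{τ,k} · x_{τ(k)} ≤ z. -/
lemma sqrt_diff_anti {a b d : ℝ} (ha : 0 ≤ a) (hab : a ≤ b) (hd : 0 ≤ d) :
    Real.sqrt (b + d) - Real.sqrt b ≤ Real.sqrt (a + d) - Real.sqrt a := by
  have hb : 0 ≤ b := le_trans ha hab
  have h1 := Real.sq_sqrt ha
  have h2 := Real.sq_sqrt hb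
  have h3 := Real.sq_sqrt (by linarith : (0:ℝ) ≤ a + d)
  have h4 := Real.sq_sqrt (by linarith : (0:ℝ) ≤ b + d)
  have n1 := Real.sqrt_nonneg a
  have n2 := Real.sqrt_nonneg b
  have n3 := Real.sqrt_nonneg (a + d)
  have n4 := Real.sqrt_nonneg (b + d)
  have m1 : Real.sqrt a ≤ Real.sqrt b := Real.sqrt_le_sqrt hab
  have m2 : Real.sqrt (a + d) ≤ Real.sqrt (b + d) := Real.sqrt_le_sqrt (by linarith)
  have m3 : Real.sqrt a ≤ Real.sqrt (a + d) := Real.sqrt_le_sqrt (by linarith)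
  have m4 : Real.sqrt b ≤ Real.sqrt (b + d) := Real.sqrt_le_sqrt (by linarith)
  nlinarith [mul_nonneg (sub_nonneg.2 m2) (sub_nonneg.2 m1),
    sq_nonneg (Real.sqrt (b + d) - Real.sqrt (a + d)),
    sq_nonneg (Real.sqrt b - Real.sqrt a)]

lemma aux_nat (σ : ℝ) (hσ : 0 ≤ σ) (c x : ℕ → ℝ) (hc : ∀ i, 0 ≤ c i)
    (hx : ∀ i, x i = 0 ∨ x i = 1) (m : ℕ) :
    Real.sqrt σ + ∑ k ∈ Finset.range m,
      (Real.sqrt (σ + ∑ j ∈ Finset.range (k+1), c j) -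
       Real.sqrt (σ + ∑ j ∈ Finset.range k, c j)) * x k
    ≤ Real.sqrt (σ + ∑ k ∈ Finset.range m, c k * x k) := by
  induction m with
  | zero => simp
  | succ m ih =>
    rw [Finset.sum_range_succ, Finset.sum_range_succ (f := fun k => c k * x k), ← add_assoc]
    have hcs : (0:ℝ) ≤ ∑ j ∈ Finset.range m, c j :=
      Finset.sum_nonneg fun j _ => hc j
    have hcxs : (0:ℝ) ≤ ∑ j ∈ Finset.range m, c j * x j := by
      refine Finset.sum_nonneg fun j _ => ?_
      rcases hx j with h | h <;> simp [h, hc j]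
    have hcx_le : ∑ j ∈ Finset.range m, c j * x j ≤ ∑ j ∈ Finset.range m, c j := by
      refine Finset.sum_le_sum fun j _ => ?_
      rcases hx j with h | h <;> simp [h, hc j]
    rcases hx m with h | h
    · rw [h]
      have : Real.sqrt (σ + ∑ j ∈ Finset.range m, c j * x j) ≤
          Real.sqrt (σ + (∑ j ∈ Finset.range m, c j * x j + c m * 0)) := by
        apply Real.sqrt_le_sqrt; ring_nf; linarith
      simpa using le_trans ih this
    · rw [h, mul_one, mul_one]
      have key := sqrt_diff_anti (a := σ + ∑ j ∈ Finset.range m, c j * x j)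
        (b := σ + ∑ j ∈ Finset.range m, c j) (d := c m)
        (by linarith) (by linarith) (hc m)
      have e1 : σ + ∑ j ∈ Finset.range (m+1), c j = (σ + ∑ j ∈ Finset.range m, c j) + c m := by
        rw [Finset.sum_range_succ]; ring
      have e2 : σ + (∑ j ∈ Finset.range m, c j * x j + c m) =
          (σ + ∑ j ∈ Finset.range m, c j * x j) + c m := by ring
      rw [e1, e2]
      linarith

/-- For every pair (x, z) in H_B and every permutation τ of {1,…,n},
the polymatroid inequality holds: √σ + ∑ₖ π^σ_{τ,k} · x_{τ(k)} ≤ z. -/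
theorem polymatroid_inequality_valid
    (n : ℕ) (σ : ℝ) (hσ : 0 ≤ σ) (c : Fin n → ℝ) (hc : ∀ i, 0 < c i)
    (τ : Equiv.Perm (Fin n)) (x : Fin n → ℝ) (z : ℝ)
    (hx : ∀ i, x i = 0 ∨ x i = 1) (hz : 0 ≤ z)
    (hxz : Real.sqrt (σ + ∑ i, c i * x i) ≤ z) :
    Real.sqrt σ +
      ∑ k, (Real.sqrt (σ + ∑ j ∈ Finset.Iic k, c (τ j)) -
            Real.sqrt (σ + ∑ j ∈ Finset.Iio k, c (τ j))) * x (τ k) ≤ z := by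
  set c' : ℕ → ℝ := fun j => if h : j < n then c (τ ⟨j, h⟩) else 0 with hc'
  set x' : ℕ → ℝ := fun j => if h : j < n then x (τ ⟨j, h⟩) else 0 with hx'
  have hc'0 : ∀ i, 0 ≤ c' i := by
    intro i; simp only [hc']
    split
    · exact (hc _).le
    · exact le_refl 0
  have hx'01 : ∀ i, x' i = 0 ∨ x' i = 1 := by
    intro i; simp only [hx']
    split
    · exact hx _
    · exact Or.inl rfl
  have key := aux_nat σ hσ c' x' hc'0 hx'01 n
  -- convert Fin Iic/Iio sums to Nat range sums
  have hIic : ∀ (k : Fin n), ∑ j ∈ Finset.range (k.val + 1), c' j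
      = ∑ j ∈ Finset.Iic k, c (τ j) := by
    intro k
    have : Finset.range (k.val + 1) = (Finset.Iic k).map Fin.valEmbedding := by
      rw [Fin.map_valEmbedding_Iic]
      ext j; simp [Nat.lt_succ_iff]
    rw [this, Finset.sum_map]
    apply Finset.sum_congr rfl
    intro j _
    simp only [Fin.valEmbedding_apply, hc', j.isLt, dif_pos, Fin.eta]
  have hIio : ∀ (k : Fin n), ∑ j ∈ Finset.range k.val, c' j
      = ∑ j ∈ Finset.Iio k, c (τ j) := by
    intro k
    have : Finset.range k.val = (Finset.Iio k).map Fin.valEmbedding := by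
      rw [Fin.map_valEmbedding_Iio]
      ext j; simp
    rw [this, Finset.sum_map]
    apply Finset.sum_congr rfl
    intro j _
    simp only [Fin.valEmbedding_apply, hc', j.isLt, dif_pos, Fin.eta]
  have hsum1 : ∑ k ∈ Finset.range n,
      (Real.sqrt (σ + ∑ j ∈ Finset.range (k+1), c' j) -
       Real.sqrt (σ + ∑ j ∈ Finset.range k, c' j)) * x' k
      = ∑ k, (Real.sqrt (σ + ∑ j ∈ Finset.Iic k, c (τ j)) -
            Real.sqrt (σ + ∑ j ∈ Finset.Iio k, c (τ j))) * x (τ k) := by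
    rw [← Fin.sum_univ_eq_sum_range]
    apply Finset.sum_congr rfl
    intro k _
    rw [hIic k, hIio k]
    simp only [hx', k.isLt, dif_pos, Fin.eta]
  have hsum2 : ∑ k ∈ Finset.range n, c' k * x' k = ∑ i, c i * x i := by
    rw [← Fin.sum_univ_eq_sum_range]
    have e : ∀ k : Fin n, c' k.val * x' k.val = c (τ k) * x (τ k) := by
      intro k; simp only [hc', hx', k.isLt, dif_pos, Fin.eta]
    rw [Finset.sum_congr rfl (fun k _ => e k)]
    exact Equiv.sum_comp τ (fun i => c i * x i)
  rw [hsum1, hsum2] at key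
  linarith
end

section
/- The convex hull of H_B (taken in ℝ^n × ℝ) equals the set of pairs (x, z) with 0 ≤ x_i ≤ 1 for all i, z ≥ 0, and, for every permutation τ of {1,…,n}, √σ + ∑_{k=1}^n π^σ_{τ,k} · x_{τ(k)} ≤ z. -/
/-!
Put `F(S) = f (σ + ∑ i ∈ S, c i)` for concave `f` (here `√`) and `c ≥ 0`. Concavity gives diminishing
increments, `f (v + d) - f v ≤ f (u + d) - f u` for `u ≤ v`, so along the chain
`∅ ⊆ {τ 0} ⊆ {τ 0, τ 1} ⊆ …` the increment of `F` at `τ k` is at most its increment along the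
part of the chain lying in any `S`; summing gives every polymatroid inequality at a 0/1 point, and
the polyhedron is convex, so it contains the hull. Conversely, if `τ` sorts `x` decreasingly, then
`(x, z)` is the convex combination of the chain vertices
`(𝟙{τ 0, …, τ (m-1)}, F {τ 0, …, τ (m-1)} + slack)` with weights `x (τ (m-1)) - x (τ m)`
(with `x (τ (-1)) = 1`, `x (τ n) = 0`), by summation by parts.
-/

open Finset

section

variable {n : ℕ}

theorem ConcaveOn.map_add_sub_map_le {𝕜 : Type*} [Field 𝕜] [LinearOrder 𝕜] [IsStrictOrderedRing 𝕜]
    {s : Set 𝕜} {f : 𝕜 → 𝕜} (hf : ConcaveOn 𝕜 s f) {u v d : 𝕜} (hu : u ∈ s) (hvd : v + d ∈ s)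
    (huv : u ≤ v) (hd : 0 ≤ d) : f (v + d) - f v ≤ f (u + d) - f u := by
  rcases (add_le_add huv hd).eq_or_lt with h | h
  · obtain rfl : u = v := by linarith
    obtain rfl : d = 0 := by linarith
    simp
  -- `u + d` and `v` are the convex combinations of `u` and `v + d` with swapped weights
  have hpos : 0 < v + d - u := by linarith
  set l := (v - u) / (v + d - u)
  have hl : 0 ≤ l := div_nonneg (by linarith) hpos.le
  have hl' : 0 ≤ 1 - l := by
    rw [sub_nonneg, div_le_one hpos]; linarith
  have h1 := hf.2 hu hvd hl hl' (by ring)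
  have h2 := hf.2 hu hvd hl' hl (by ring)
  have e1 : l • u + (1 - l) • (v + d) = u + d := by
    simp only [smul_eq_mul, l]; field_simp; ring
  have e2 : (1 - l) • u + l • (v + d) = v := by
    simp only [smul_eq_mul, l]; field_simp; ring
  rw [e1] at h1
  rw [e2] at h2
  simp only [smul_eq_mul] at h1 h2
  linarith

/-- `polymatroidCoeff f σ (c ∘ τ) k` is the paper's `π^σ_{τ,k}` with `√` replaced by `f`, indexed
from `0`. -/
def polymatroidCoeff (f : ℝ → ℝ) (σ : ℝ) (b : Fin n → ℝ) (k : Fin n) : ℝ :=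
  f (σ + ∑ j ∈ Iic k, b j) - f (σ + ∑ j ∈ Iio k, b j)

theorem polymatroidCoeff_castSucc (f : ℝ → ℝ) (σ : ℝ) (b : Fin (n + 1) → ℝ) (k : Fin n) :
    polymatroidCoeff f σ b k.castSucc = polymatroidCoeff f σ (b ∘ Fin.castSucc) k := by
  simp only [polymatroidCoeff, Fin.sum_Iic_castSucc, Fin.sum_Iio_castSucc, Function.comp_apply]

theorem polymatroidCoeff_last (f : ℝ → ℝ) (σ : ℝ) (b : Fin (n + 1) → ℝ) :
    polymatroidCoeff f σ b (Fin.last n) =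
      f (σ + ∑ j, b j) - f (σ + ∑ j : Fin n, b j.castSucc) := by
  have : Iic (Fin.last n) = univ := by ext; simp [Fin.le_last]
  rw [polymatroidCoeff, this, Fin.Iio_last_eq_map, sum_map]
  rfl

theorem add_sum_polymatroidCoeff_mul_le {f : ℝ → ℝ} {σ : ℝ} (hf : ConcaveOn ℝ (Set.Ici σ) f) :
    ∀ {n : ℕ} {b t : Fin n → ℝ}, (∀ k, 0 ≤ b k) → (∀ k, t k = 0 ∨ t k = 1) →
      f σ + ∑ k, polymatroidCoeff f σ b k * t k ≤ f (σ + ∑ k, b k * t k)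
  | 0, _, _, _, _ => by simp
  | n + 1, b, t, hb, ht => by
    have ih := add_sum_polymatroidCoeff_mul_le hf (b := b ∘ Fin.castSucc) (t := t ∘ Fin.castSucc)
      (fun _ => hb _) (fun _ => ht _)
    have hbt : ∀ k, 0 ≤ b k * t k ∧ b k * t k ≤ b k := fun k => by
      rcases ht k with h | h <;> simp [h, hb k]
    have hsum : 0 ≤ ∑ k : Fin n, b k.castSucc * t k.castSucc :=
      sum_nonneg fun _ _ => (hbt _).1
    have hle : ∑ k : Fin n, b k.castSucc * t k.castSucc ≤ ∑ k : Fin n, b k.castSucc :=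
      sum_le_sum fun _ _ => (hbt _).2
    have key : polymatroidCoeff f σ b (Fin.last n) * t (Fin.last n) ≤
        f (σ + (∑ k : Fin n, b k.castSucc * t k.castSucc + b (Fin.last n) * t (Fin.last n))) -
          f (σ + ∑ k : Fin n, b k.castSucc * t k.castSucc) := by
      rw [polymatroidCoeff_last, Fin.sum_univ_castSucc, ← add_assoc, ← add_assoc]
      rcases ht (Fin.last n) with h | h
      · simp [h]
      · simp only [h, mul_one]
        exact hf.map_add_sub_map_le (by simpa using hsum) (by rw [Set.mem_Ici]; linarith [hb (Fin.last n)])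
          (by linarith) (hb _)
    rw [Fin.sum_univ_castSucc, Fin.sum_univ_castSucc (fun k => b k * t k)]
    simp only [polymatroidCoeff_castSucc]
    simp only [Function.comp_apply] at ih
    linarith

theorem sum_range_succ_sub_smul {R M : Type*} [CommRing R] [AddCommGroup M] [Module R M]
    (a : ℕ → R) (P : ℕ → M) (n : ℕ) :
    ∑ m ∈ range (n + 1), (a m - a (m + 1)) • P m =
      a 0 • P 0 - a (n + 1) • P n + ∑ k ∈ range n, a (k + 1) • (P (k + 1) - P k) := by
  induction n with
  | zero => simp [sub_smul]
  | succ n ih =>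
    rw [sum_range_succ, ih, sum_range_succ]
    module

theorem exists_perm_antitone_comp {α : Type*} [LinearOrder α] (x : Fin n → α) :
    ∃ τ : Equiv.Perm (Fin n), Antitone (x ∘ τ) :=
  ⟨Tuple.sort (OrderDual.toDual ∘ x), Tuple.monotone_sort (OrderDual.toDual ∘ x)⟩

theorem Antitone.exists_nat_extension {y : Fin n → ℝ} (hy : Antitone y)
    (h0 : ∀ k, 0 ≤ y k) (h1 : ∀ k, y k ≤ 1) :
    ∃ a : ℕ → ℝ, Antitone a ∧ a 0 = 1 ∧ a (n + 1) = 0 ∧ ∀ k : Fin n, a (k + 1) = y k := by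
  refine ⟨fun m => if m = 0 then 1 else if h : m - 1 < n then y ⟨m - 1, h⟩ else 0,
    antitone_nat_of_succ_le fun m => ?_, by simp, by simp, fun k => by simp⟩
  rcases m with _ | m
  · simp only [zero_add, one_ne_zero, ↓reduceIte, Nat.sub_self]
    split_ifs <;> simp [h1]
  · simp only [Nat.add_one_ne_zero, ↓reduceIte, Nat.add_sub_cancel]
    split_ifs with hm hm'
    · exact hy (Fin.mk_le_mk.2 m.le_succ)
    · omega
    · exact h0 _
    · rfl

def prefixIndicator (τ : Equiv.Perm (Fin n)) (m : ℕ) : Fin n → ℝ :=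
  fun i => if (τ.symm i : ℕ) < m then 1 else 0

theorem prefixIndicator_zero (τ : Equiv.Perm (Fin n)) : prefixIndicator τ 0 = 0 := by
  ext; simp [prefixIndicator]

theorem prefixIndicator_eq_zero_or_one (τ : Equiv.Perm (Fin n)) (m : ℕ) (i : Fin n) :
    prefixIndicator τ m i = 0 ∨ prefixIndicator τ m i = 1 := by
  unfold prefixIndicator; split_ifs <;> simp

theorem prefixIndicator_succ_sub (τ : Equiv.Perm (Fin n)) (k : Fin n) :
    prefixIndicator τ (k + 1) - prefixIndicator τ k = Pi.single (τ k) 1 := by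
  ext i
  rcases eq_or_ne i (τ k) with rfl | hi
  · simp [prefixIndicator]
  · have : (τ.symm i : ℕ) ≠ k := fun h => hi (by rw [← Fin.ext h]; simp)
    simp only [prefixIndicator, Pi.sub_apply, Pi.single_apply, hi, ↓reduceIte]
    split_ifs <;> first | omega | simp

theorem sum_mul_prefixIndicator (τ : Equiv.Perm (Fin n)) (c : Fin n → ℝ) (m : ℕ) :
    ∑ i, c i * prefixIndicator τ m i =
      ∑ j ∈ univ.filter (fun j : Fin n => (j : ℕ) < m), c (τ j) := by
  rw [← Equiv.sum_comp τ, sum_filter]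
  simp [prefixIndicator]

theorem sum_mul_prefixIndicator_coe (τ : Equiv.Perm (Fin n)) (c : Fin n → ℝ) (k : Fin n) :
    ∑ i, c i * prefixIndicator τ k i = ∑ j ∈ Iio k, c (τ j) := by
  rw [sum_mul_prefixIndicator]
  refine sum_congr ?_ fun _ _ => rfl
  ext j; simp

theorem sum_mul_prefixIndicator_succ (τ : Equiv.Perm (Fin n)) (c : Fin n → ℝ) (k : Fin n) :
    ∑ i, c i * prefixIndicator τ (k + 1) i = ∑ j ∈ Iic k, c (τ j) := by
  rw [sum_mul_prefixIndicator]
  refine sum_congr ?_ fun _ _ => rfl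
  ext j
  simp only [mem_filter, mem_univ, true_and, mem_Iic, Fin.le_def]
  omega

def binaryEpigraph (f : ℝ → ℝ) (σ : ℝ) (c : Fin n → ℝ) : Set ((Fin n → ℝ) × ℝ) :=
  {p | (∀ i, p.1 i = 0 ∨ p.1 i = 1) ∧ 0 ≤ p.2 ∧ f (σ + ∑ i, c i * p.1 i) ≤ p.2}

def polymatroidPolyhedron (f : ℝ → ℝ) (σ : ℝ) (c : Fin n → ℝ) : Set ((Fin n → ℝ) × ℝ) :=
  {p | (∀ i, 0 ≤ p.1 i ∧ p.1 i ≤ 1) ∧ 0 ≤ p.2 ∧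
    ∀ τ : Equiv.Perm (Fin n), f σ + ∑ k, polymatroidCoeff f σ (c ∘ τ) k * p.1 (τ k) ≤ p.2}

theorem convex_polymatroidPolyhedron (f : ℝ → ℝ) (σ : ℝ) (c : Fin n → ℝ) :
    Convex ℝ (polymatroidPolyhedron f σ c) := by
  rintro p ⟨hpx, hpz, hp⟩ q ⟨hqx, hqz, hq⟩ a b ha hb hab
  refine ⟨fun i => ?_, ?_, fun τ => ?_⟩
  · simp only [Prod.fst_add, Prod.smul_fst, Pi.add_apply, Pi.smul_apply, smul_eq_mul]
    constructor <;> nlinarith [hpx i, hqx i]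
  · simp only [Prod.snd_add, Prod.smul_snd, smul_eq_mul]
    positivity
  · simp only [Prod.fst_add, Prod.smul_fst, Prod.snd_add, Prod.smul_snd, Pi.add_apply,
      Pi.smul_apply, smul_eq_mul, mul_add, sum_add_distrib]
    simp only [mul_left_comm _ a, mul_left_comm _ b, ← mul_sum]
    linear_combination a * hp τ + b * hq τ - f σ * hab

theorem binaryEpigraph_subset_polymatroidPolyhedron {f : ℝ → ℝ} {σ : ℝ}
    (hf : ConcaveOn ℝ (Set.Ici σ) f) {c : Fin n → ℝ} (hc : ∀ i, 0 ≤ c i) :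
    binaryEpigraph f σ c ⊆ polymatroidPolyhedron f σ c := by
  rintro p ⟨hx, hz, hp⟩
  refine ⟨fun i => by rcases hx i with h | h <;> simp [h], hz, fun τ => ?_⟩
  calc f σ + ∑ k, polymatroidCoeff f σ (c ∘ τ) k * p.1 (τ k)
      ≤ f (σ + ∑ k, c (τ k) * p.1 (τ k)) :=
        add_sum_polymatroidCoeff_mul_le hf (fun _ => hc _) (fun _ => hx _)
    _ = f (σ + ∑ i, c i * p.1 i) := by rw [Equiv.sum_comp τ (fun i => c i * p.1 i)]
    _ ≤ p.2 := hp

theorem polymatroidPolyhedron_subset_convexHull {f : ℝ → ℝ} {σ : ℝ} {c : Fin n → ℝ}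
    (hf₀ : ∀ x, σ ≤ x → 0 ≤ f x) (hc : ∀ i, 0 ≤ c i) :
    polymatroidPolyhedron f σ c ⊆ convexHull ℝ (binaryEpigraph f σ c) := by
  rintro ⟨x, z⟩ ⟨hx, -, hz⟩
  obtain ⟨τ, hτ⟩ := exists_perm_antitone_comp x
  obtain ⟨a, ha, ha0, han, hak⟩ :=
    hτ.exists_nat_extension (fun _ => (hx _).1) (fun _ => (hx _).2)
  set E := z - (f σ + ∑ k, polymatroidCoeff f σ (c ∘ τ) k * x (τ k))
  have hE : 0 ≤ E := sub_nonneg.2 (hz τ)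
  set P : ℕ → (Fin n → ℝ) × ℝ :=
    fun m => (prefixIndicator τ m, f (σ + ∑ i, c i * prefixIndicator τ m i) + E)
  have hP : ∀ m, P m ∈ binaryEpigraph f σ c := fun m =>
    ⟨prefixIndicator_eq_zero_or_one τ m,
      add_nonneg (hf₀ _ (by
        rw [sum_mul_prefixIndicator]; exact le_add_of_nonneg_right (sum_nonneg fun j _ => hc _)))
        hE,
      le_add_of_nonneg_right hE⟩
  have hPsucc : ∀ k : Fin n,
      P (k + 1) - P k = (Pi.single (τ k) 1, polymatroidCoeff f σ (c ∘ τ) k) := fun k => by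
    simp only [P, Prod.mk_sub_mk, prefixIndicator_succ_sub, sum_mul_prefixIndicator_coe,
      sum_mul_prefixIndicator_succ, add_sub_add_right_eq_sub, polymatroidCoeff, Function.comp_apply]
  have hxz : (x, z) = ∑ m ∈ range (n + 1), (a m - a (m + 1)) • P m := by
    rw [sum_range_succ_sub_smul, ha0, han, one_smul, zero_smul, sub_zero,
      ← Fin.sum_univ_eq_sum_range (fun k => a (k + 1) • (P (k + 1) - P k))]
    simp only [hak, hPsucc, P, prefixIndicator_zero]
    refine Prod.ext ?_ ?_
    · simp only [Prod.fst_add, Prod.fst_sum, Prod.smul_fst, Function.comp_apply, zero_add]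
      exact (pi_eq_sum_univ' x).trans (Equiv.sum_comp τ fun i => x i • Pi.single i 1).symm
    · simp only [Prod.snd_add, Prod.snd_sum, Prod.smul_snd, Function.comp_apply, smul_eq_mul, E]
      simp only [Pi.zero_apply, mul_zero, sum_const_zero, add_zero, mul_comm (x _)]
      ring
  rw [hxz]
  exact (convex_convexHull ℝ _).sum_mem (fun m _ => sub_nonneg.2 (ha m.le_succ))
    (by rw [sum_range_sub']; simp [ha0, han]) (fun m _ => subset_convexHull ℝ _ (hP m))

theorem convexHull_binaryEpigraph {f : ℝ → ℝ} {σ : ℝ} {c : Fin n → ℝ}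
    (hf : ConcaveOn ℝ (Set.Ici σ) f) (hf₀ : ∀ x, σ ≤ x → 0 ≤ f x) (hc : ∀ i, 0 ≤ c i) :
    convexHull ℝ (binaryEpigraph f σ c) = polymatroidPolyhedron f σ c :=
  (convexHull_min (binaryEpigraph_subset_polymatroidPolyhedron hf hc)
    (convex_polymatroidPolyhedron f σ c)).antisymm (polymatroidPolyhedron_subset_convexHull hf₀ hc)

end

/-- The convex hull of H_B equals the set of pairs (x, z) with
0 ≤ xᵢ ≤ 1, z ≥ 0, and all polymatroid inequalities. -/
theorem convexHull_HB
    (n : ℕ) (σ : ℝ) (hσ : 0 ≤ σ) (c : Fin n → ℝ) (hc : ∀ i, 0 < c i) :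
    convexHull ℝ {p : (Fin n → ℝ) × ℝ | (∀ i, p.1 i = 0 ∨ p.1 i = 1) ∧ 0 ≤ p.2 ∧
        Real.sqrt (σ + ∑ i, c i * p.1 i) ≤ p.2} =
      {p : (Fin n → ℝ) × ℝ | (∀ i, 0 ≤ p.1 i ∧ p.1 i ≤ 1) ∧ 0 ≤ p.2 ∧
        ∀ τ : Equiv.Perm (Fin n),
          Real.sqrt σ +
            ∑ k, (Real.sqrt (σ + ∑ j ∈ Finset.Iic k, c (τ j)) -
                  Real.sqrt (σ + ∑ j ∈ Finset.Iio k, c (τ j))) * p.1 (τ k) ≤ p.2} :=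
  convexHull_binaryEpigraph
    (Real.strictConcaveOn_sqrt.concaveOn.subset (Set.Ici_subset_Ici.2 hσ) (convex_Ici σ))
    (fun x _ => Real.sqrt_nonneg x) (fun i => (hc i).le)
end

section
/- Let (x̄, z̄) ∈ ℝ^n × ℝ satisfy 0 ≤ x̄_i ≤ 1 for all i, z̄ ≥ 0, and x̄_1 ≥ x̄_2 ≥ … ≥ x̄_n. If (x̄, z̄) does not belong to the convex hull of H_B, then the polymatroid inequality for the identity permutation is violated, i.e., √σ + ∑_{k=1}^n (√(σ + ∑_{j=1}^{k} c_j) − √(σ + ∑_{j=1}^{k−1} c_j)) · x̄_k > z̄. -/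
private lemma abel_sum (E F : ℕ → ℝ) : ∀ n : ℕ,
    ∑ k ∈ Finset.range (n + 1), (E k - E (k + 1)) * F k
      = E 0 * F 0 - E (n + 1) * F n
        + ∑ k ∈ Finset.range n, E (k + 1) * (F (k + 1) - F k) := by
  intro n
  induction n with
  | zero => simp [sub_mul]
  | succ m ih =>
      rw [Finset.sum_range_succ, ih, Finset.sum_range_succ]
      ring

/-- If 0 ≤ x̄ ≤ 1 is sorted non-increasingly, z̄ ≥ 0, and (x̄, z̄) is not in
the convex hull of H_B, then the polymatroid inequality for the identity permutation is
violated. -/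
theorem polymatroid_separation
    (n : ℕ) (σ : ℝ) (hσ : 0 ≤ σ) (c : Fin n → ℝ) (hc : ∀ i, 0 < c i)
    (x : Fin n → ℝ) (z : ℝ)
    (hx : ∀ i, 0 ≤ x i ∧ x i ≤ 1) (hz : 0 ≤ z)
    (hsort : ∀ i j : Fin n, i ≤ j → x j ≤ x i)
    (hnot : (x, z) ∉ convexHull ℝ {p : (Fin n → ℝ) × ℝ |
        (∀ i, p.1 i = 0 ∨ p.1 i = 1) ∧ 0 ≤ p.2 ∧
        Real.sqrt (σ + ∑ i, c i * p.1 i) ≤ p.2}) :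
    z < Real.sqrt σ +
      ∑ k, (Real.sqrt (σ + ∑ j ∈ Finset.Iic k, c j) -
            Real.sqrt (σ + ∑ j ∈ Finset.Iio k, c j)) * x k := by
  by_contra hcon
  push_neg at hcon
  apply hnot
  set RHS : ℝ := Real.sqrt σ +
      ∑ k, (Real.sqrt (σ + ∑ j ∈ Finset.Iic k, c j) -
            Real.sqrt (σ + ∑ j ∈ Finset.Iio k, c j)) * x k with hRHS
  -- extended x and weights
  set xx : ℕ → ℝ := fun k => if h : k < n then x ⟨k, h⟩ else 0 with hxx
  set E : ℕ → ℝ := fun k => if k = 0 then 1 else xx (k - 1) with hE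
  set w : ℕ → ℝ := fun k => E k - E (k + 1) with hw
  set C : ℕ → ℝ :=
    fun m => ∑ j ∈ Finset.univ.filter (fun j : Fin n => (j : ℕ) < m), c j with hC
  set F : ℕ → ℝ := fun m => Real.sqrt (σ + C m) with hF
  have hxx0 : ∀ k, 0 ≤ xx k := by
    intro k
    simp only [hxx]
    split
    · exact (hx _).1
    · exact le_refl 0
  have hxx1 : ∀ k, xx k ≤ 1 := by
    intro k
    simp only [hxx]
    split
    · exact (hx _).2
    · exact zero_le_one
  have hxxmono : ∀ k, xx (k + 1) ≤ xx k := by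
    intro k
    simp only [hxx]
    split
    · rename_i h1
      have h0 : k < n := Nat.lt_of_succ_lt h1
      rw [dif_pos h0]
      exact hsort ⟨k, h0⟩ ⟨k + 1, h1⟩ (by simp [Fin.le_def])
    · split
      · exact (hx _).1
      · exact le_refl 0
  have hE0 : E 0 = 1 := by simp [hE]
  have hEsucc : ∀ k, E (k + 1) = xx k := by intro k; simp [hE]
  have hEn : E (n + 1) = 0 := by
    rw [hEsucc]; simp [hxx]
  have hwpos : ∀ k, 0 ≤ w k := by
    intro k
    simp only [hw, sub_nonneg]
    match k with
    | 0 => rw [hE0, hEsucc]; exact hxx1 0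
    | m + 1 => rw [hEsucc, hEsucc]; exact hxxmono m
  have hwsum : ∑ k ∈ Finset.range (n + 1), w k = 1 := by
    simp only [hw]
    rw [Finset.sum_range_sub' E, hE0, hEn, sub_zero]
  -- the points
  set vec : ℕ → Fin n → ℝ := fun k i => if (i : ℕ) < k then 1 else 0 with hvec
  set p : ℕ → (Fin n → ℝ) × ℝ := fun k => (vec k, F k + (z - RHS)) with hp
  -- C of the points
  have hCvec : ∀ k, (∑ i, c i * vec k i) = C k := by
    intro k
    simp only [hC]
    rw [Finset.sum_filter]
    refine Finset.sum_congr rfl fun i _ => ?_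
    simp only [hvec]
    split <;> simp
  -- RHS rewritten
  have hIic : ∀ k : Fin n, (∑ j ∈ Finset.Iic k, c j) = C ((k : ℕ) + 1) := by
    intro k
    simp only [hC]
    refine Finset.sum_congr ?_ fun _ _ => rfl
    ext j
    simp only [Finset.mem_Iic, Finset.mem_filter, Finset.mem_univ, true_and, Fin.le_def]
    omega
  have hIio : ∀ k : Fin n, (∑ j ∈ Finset.Iio k, c j) = C (k : ℕ) := by
    intro k
    simp only [hC]
    refine Finset.sum_congr ?_ fun _ _ => rfl
    ext j
    simp only [Finset.mem_Iio, Finset.mem_filter, Finset.mem_univ, true_and, Fin.lt_def]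
  have hC0 : C 0 = 0 := by simp [hC]
  have hRHS' : RHS = F 0 + ∑ k ∈ Finset.range n, xx k * (F (k + 1) - F k) := by
    rw [hRHS]
    congr 1
    · simp only [hF]
      rw [hC0, add_zero]
    · rw [← Fin.sum_univ_eq_sum_range (fun k => xx k * (F (k + 1) - F k)) n]
      refine Finset.sum_congr rfl fun k _ => ?_
      rw [hIic, hIio]
      have hxk : xx (k : ℕ) = x k := by simp only [hxx, dif_pos k.isLt, Fin.eta]
      rw [hxk]
      ring
  -- the convex combination equals (x, z)
  have hkey : (x, z) = ∑ k ∈ Finset.range (n + 1), w k • p k := by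
    refine Prod.ext ?_ ?_
    · rw [Prod.fst_sum]
      funext i
      rw [Finset.sum_apply]
      have : ∀ k, (w k • p k).1 i = if (i : ℕ) < k then w k else 0 := by
        intro k
        simp only [hp, Prod.smul_fst, Pi.smul_apply, smul_eq_mul, hvec]
        split <;> simp
      simp only [this]
      rw [← Finset.sum_filter]
      have hfil : (Finset.range (n + 1)).filter (fun k => (i : ℕ) < k)
          = Finset.Ico ((i : ℕ) + 1) (n + 1) := by
        ext k
        simp only [Finset.mem_filter, Finset.mem_range, Finset.mem_Ico]
        omega
      rw [hfil, Finset.sum_Ico_eq_sub _ (by omega : (i : ℕ) + 1 ≤ n + 1)]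
      simp only [hw]
      rw [Finset.sum_range_sub' E, Finset.sum_range_sub' E, hEn, hEsucc]
      simp [hxx, i.isLt]
    · rw [Prod.snd_sum]
      have : ∀ k, (w k • p k).2 = w k * F k + w k * (z - RHS) := by
        intro k
        simp only [hp, Prod.smul_snd, smul_eq_mul]
        ring
      simp only [this]
      rw [Finset.sum_add_distrib, ← Finset.sum_mul, hwsum, one_mul]
      have habel : ∑ k ∈ Finset.range (n + 1), w k * F k = RHS := by
        simp only [hw]
        rw [abel_sum E F n, hE0, hEn, hRHS']
        simp only [hEsucc]
        ring
      rw [habel]; ring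
  rw [hkey]
  refine Convex.sum_mem (convex_convexHull ℝ _) (fun k _ => hwpos k) hwsum
    (fun k _ => subset_convexHull ℝ _ ?_)
  refine ⟨fun i => ?_, ?_, ?_⟩
  · simp only [hp, hvec]
    split
    · exact Or.inr rfl
    · exact Or.inl rfl
  · simp only [hp]
    have h1 : 0 ≤ z - RHS := sub_nonneg.mpr hcon
    have h2 : 0 ≤ F k := by simp only [hF]; positivity
    linarith
  · simp only [hp]
    rw [hCvec]
    have h1 : 0 ≤ z - RHS := sub_nonneg.mpr hcon
    have h2 : Real.sqrt (σ + C k) = F k := by simp only [hF]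
    linarith
end

section
/- For every subset T ⊆ {1,…,m}, every permutation τ of {1,…,n}, and every (x, y, z) in H_C, the inequality ∑_{k=1}^n π^{σ+d(T)}_{τ,k} · x_{τ(k)} + √(σ + ∑_{i∈T} d_i y_i²) ≤ z holds, where d(T) = ∑_{i∈T} d_i. -/
private lemma sqrt_sub_sqrt_anti {a b e : ℝ} (he : 0 ≤ e) (ha : 0 ≤ a) (hab : a ≤ b) :
    Real.sqrt (b + e) - Real.sqrt b ≤ Real.sqrt (a + e) - Real.sqrt a := by
  have hb : 0 ≤ b := le_trans ha hab
  have key : Real.sqrt (a * (b + e)) ≤ Real.sqrt (b * (a + e)) := by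
    apply Real.sqrt_le_sqrt; nlinarith
  rw [Real.sqrt_mul ha, Real.sqrt_mul hb] at key
  have h1 := Real.sq_sqrt ha
  have h2 := Real.sq_sqrt hb
  have h3 := Real.sq_sqrt (by linarith : (0:ℝ) ≤ a + e)
  have h4 := Real.sq_sqrt (by linarith : (0:ℝ) ≤ b + e)
  nlinarith [Real.sqrt_nonneg a, Real.sqrt_nonneg b, Real.sqrt_nonneg (a+e),
    Real.sqrt_nonneg (b+e), sq_nonneg (Real.sqrt (b+e) + Real.sqrt a - Real.sqrt (a+e) - Real.sqrt b)]

/-- For every T ⊆ {1,…,m}, every permutation τ, and every (x, y, z) ∈ H_C: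
∑ₖ π^{σ+d(T)}_{τ,k} x_{τ(k)} + √(σ + ∑_{i∈T} dᵢ yᵢ²) ≤ z. -/
theorem polymatroid_inequality_HC
    (n m : ℕ) (σ : ℝ) (hσ : 0 ≤ σ) (c : Fin n → ℝ) (hc : ∀ i, 0 < c i)
    (d : Fin m → ℝ) (hd : ∀ i, 0 < d i) (T : Finset (Fin m)) (τ : Equiv.Perm (Fin n))
    (x : Fin n → ℝ) (y : Fin m → ℝ) (z : ℝ)
    (hx : ∀ i, x i = 0 ∨ x i = 1) (hy : ∀ i, 0 ≤ y i ∧ y i ≤ 1) (hz : 0 ≤ z)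
    (hcon : Real.sqrt (σ + ∑ i, c i * x i + ∑ i, d i * y i ^ 2) ≤ z) :
    (∑ k, (Real.sqrt ((σ + ∑ i ∈ T, d i) + ∑ j ∈ Finset.Iic k, c (τ j)) -
           Real.sqrt ((σ + ∑ i ∈ T, d i) + ∑ j ∈ Finset.Iio k, c (τ j))) * x (τ k))
      + Real.sqrt (σ + ∑ i ∈ T, d i * y i ^ 2) ≤ z := by
  set γ : ℝ := σ + ∑ i ∈ T, d i with hγdef
  have hdT : (0:ℝ) ≤ ∑ i ∈ T, d i :=
    Finset.sum_nonneg fun i _ => (hd i).le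
  have hγ : 0 ≤ γ := by positivity
  have hx01 : ∀ i, 0 ≤ x i ∧ x i ≤ 1 := by
    intro i; rcases hx i with h | h <;> simp [h]
  -- the "with x" partial sums
  set G : Finset (Fin n) → ℝ := fun s => Real.sqrt (γ + ∑ j ∈ s, c (τ j) * x (τ j)) with hG
  have hsum_nonneg : ∀ s : Finset (Fin n), (0:ℝ) ≤ ∑ j ∈ s, c (τ j) * x (τ j) :=
    fun s => Finset.sum_nonneg fun j _ => mul_nonneg (hc _).le (hx01 _).1
  -- per-term bound
  have hterm : ∀ k : Fin n,
      (Real.sqrt (γ + ∑ j ∈ Finset.Iic k, c (τ j)) -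
        Real.sqrt (γ + ∑ j ∈ Finset.Iio k, c (τ j))) * x (τ k)
        ≤ G (Finset.Iic k) - G (Finset.Iio k) := by
    intro k
    have hins : ∀ f : Fin n → ℝ, ∑ j ∈ Finset.Iic k, f j
        = f k + ∑ j ∈ Finset.Iio k, f j := by
      intro f
      rw [← Finset.Iio_insert, Finset.sum_insert (by simp)]
    have hle : γ + ∑ j ∈ Finset.Iio k, c (τ j) * x (τ j)
        ≤ γ + ∑ j ∈ Finset.Iio k, c (τ j) := by
      gcongr with j hj
      nlinarith [(hc (τ j)).le, (hx01 (τ j)).1, (hx01 (τ j)).2, hc (τ j)]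
    rcases hx (τ k) with h0 | h1
    · rw [h0, mul_zero]
      have : G (Finset.Iio k) ≤ G (Finset.Iic k) := by
        apply Real.sqrt_le_sqrt
        rw [hins]
        nlinarith [mul_nonneg (hc (τ k)).le (hx01 (τ k)).1]
      linarith
    · rw [h1, mul_one]
      simp only [hG]
      rw [hins (fun j => c (τ j)), hins (fun j => c (τ j) * x (τ j)), h1, mul_one]
      have h3 : γ + (c (τ k) + ∑ j ∈ Finset.Iio k, c (τ j))
          = (γ + ∑ j ∈ Finset.Iio k, c (τ j)) + c (τ k) := by ring
      have h4 : γ + (c (τ k) + ∑ j ∈ Finset.Iio k, c (τ j) * x (τ j))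
          = (γ + ∑ j ∈ Finset.Iio k, c (τ j) * x (τ j)) + c (τ k) := by ring
      rw [h3, h4]
      exact sqrt_sub_sqrt_anti (hc (τ k)).le
        (by linarith [hsum_nonneg (Finset.Iio k)]) hle
  -- telescoping
  set h : ℕ → ℝ := fun t =>
    Real.sqrt (γ + ∑ j ∈ Finset.univ.filter (fun j : Fin n => (j:ℕ) < t), c (τ j) * x (τ j))
    with hh
  have hIio : ∀ k : Fin n, Finset.Iio k
      = Finset.univ.filter (fun j : Fin n => (j:ℕ) < (k:ℕ)) := by
    intro k; ext j; simp only [Finset.mem_Iio, Finset.mem_filter, Finset.mem_univ, true_and, Fin.lt_iff_val_lt_val]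
  have hIic : ∀ k : Fin n, Finset.Iic k
      = Finset.univ.filter (fun j : Fin n => (j:ℕ) < (k:ℕ) + 1) := by
    intro k; ext j; simp only [Finset.mem_Iic, Finset.mem_filter, Finset.mem_univ, true_and, Fin.le_iff_val_le_val, Nat.lt_succ_iff]
  have htel : ∑ k : Fin n, (G (Finset.Iic k) - G (Finset.Iio k))
      = h n - h 0 := by
    have : ∀ k : Fin n, G (Finset.Iic k) - G (Finset.Iio k)
        = h ((k:ℕ) + 1) - h (k:ℕ) := by
      intro k; rw [hIio, hIic]
    rw [Finset.sum_congr rfl fun k _ => this k]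
    exact (Fin.sum_univ_eq_sum_range (fun t => h (t+1) - h t) n).trans
      (Finset.sum_range_sub h n)
  have hS : ∑ k : Fin n,
      (Real.sqrt (γ + ∑ j ∈ Finset.Iic k, c (τ j)) -
        Real.sqrt (γ + ∑ j ∈ Finset.Iio k, c (τ j))) * x (τ k)
      ≤ h n - h 0 := htel ▸ Finset.sum_le_sum (fun k _ => hterm k)
  have hh0 : h 0 = Real.sqrt γ := by simp [hh]
  have hfiln : Finset.univ.filter (fun j : Fin n => (j:ℕ) < n) = Finset.univ := by
    ext j; simp [j.isLt]
  have hhn : h n = Real.sqrt (γ + ∑ j : Fin n, c (τ j) * x (τ j)) := by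
    rw [hh]; simp only [hfiln]
  -- rewrite the sum over τ
  have hperm : ∑ j : Fin n, c (τ j) * x (τ j) = ∑ i, c i * x i :=
    Equiv.sum_comp τ (fun i => c i * x i)
  set S : ℝ := ∑ i, c i * x i with hSdef
  set D : ℝ := ∑ i, d i * y i ^ 2 with hDdef
  set u : ℝ := σ + ∑ i ∈ T, d i * y i ^ 2 with hudef
  have hSnn : 0 ≤ S := Finset.sum_nonneg fun i _ => mul_nonneg (hc i).le (hx01 i).1
  have hu0 : 0 ≤ u := by
    have : (0:ℝ) ≤ ∑ i ∈ T, d i * y i ^ 2 :=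
      Finset.sum_nonneg fun i _ => mul_nonneg (hd i).le (sq_nonneg _)
    linarith
  have huγ : u ≤ γ := by
    rw [hudef, hγdef]
    gcongr with i hi
    have h2 : y i ^ 2 ≤ 1 := by nlinarith [(hy i).1, (hy i).2]
    nlinarith [hd i, h2]
  have hTD : ∑ i ∈ T, d i * y i ^ 2 ≤ D :=
    Finset.sum_le_sum_of_subset_of_nonneg (Finset.subset_univ T)
      (fun i _ _ => mul_nonneg (hd i).le (sq_nonneg _))
  have key : Real.sqrt (γ + S) - Real.sqrt γ + Real.sqrt u
      ≤ Real.sqrt (σ + S + D) := by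
    have h1 : Real.sqrt (γ + S) - Real.sqrt γ ≤ Real.sqrt (u + S) - Real.sqrt u :=
      sqrt_sub_sqrt_anti hSnn hu0 huγ
    have h2 : Real.sqrt (u + S) ≤ Real.sqrt (σ + S + D) := by
      apply Real.sqrt_le_sqrt; rw [hudef]; linarith
    linarith
  have := hS
  rw [hh0, hhn, hperm] at this
  linarith [hcon, key, this]
end

section
/- For every permutation τ of {1,…,n} and every (x, y, z) in H_D, the nonlinear polymatroid inequality holds: (√σ + ∑_{k=1}^n π^σ_{τ,k} · x_{τ(k)})² + ∑_{i=1}^m d_i y_i² ≤ z². -/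
lemma sqrt_diff_mono (a b e : ℝ) (hb : 0 ≤ b) (he : 0 ≤ e) (hba : b ≤ a) :
    Real.sqrt (a + e) - Real.sqrt a ≤ Real.sqrt (b + e) - Real.sqrt b := by
  have ha : 0 ≤ a := hb.trans hba
  have h1 : Real.sqrt ((a + e) * b) ≤ Real.sqrt (a * (b + e)) :=
    Real.sqrt_le_sqrt (by nlinarith)
  rw [Real.sqrt_mul (by linarith), Real.sqrt_mul ha] at h1
  nlinarith [Real.sq_sqrt ha, Real.sq_sqrt hb, Real.sq_sqrt (add_nonneg ha he),
    Real.sq_sqrt (add_nonneg hb he), Real.sqrt_nonneg a, Real.sqrt_nonneg b,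
    Real.sqrt_nonneg (a + e), Real.sqrt_nonneg (b + e),
    Real.sqrt_le_sqrt (show b ≤ a + e by linarith), Real.sqrt_le_sqrt hba]

lemma key_lemma (σ : ℝ) (hσ : 0 ≤ σ) (g ε : ℕ → ℝ) (hg : ∀ j, 0 ≤ g j)
    (hε : ∀ j, ε j = 0 ∨ ε j = 1) (N : ℕ) :
    Real.sqrt σ + ∑ k ∈ Finset.range N,
      (Real.sqrt (σ + ∑ j ∈ Finset.range (k + 1), g j) -
       Real.sqrt (σ + ∑ j ∈ Finset.range k, g j)) * ε k ≤
    Real.sqrt (σ + ∑ j ∈ Finset.range N, g j * ε j) := by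
  induction N with
  | zero => simp
  | succ N ih =>
    rw [Finset.sum_range_succ, Finset.sum_range_succ (f := fun j => g j * ε j)]
    have hP : 0 ≤ ∑ j ∈ Finset.range N, g j * ε j := by
      apply Finset.sum_nonneg; intro j _
      rcases hε j with h | h <;> simp [h, hg j]
    have hS : (∑ j ∈ Finset.range N, g j * ε j) ≤ ∑ j ∈ Finset.range N, g j := by
      apply Finset.sum_le_sum; intro j _
      rcases hε j with h | h <;> simp [h, hg j]
    rcases hε N with h | h
    · rw [h]; simp only [mul_zero, add_zero]
      exact ih
    · rw [h, mul_one, mul_one]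
      have := sqrt_diff_mono (σ + ∑ j ∈ Finset.range N, g j)
        (σ + ∑ j ∈ Finset.range N, g j * ε j) (g N)
        (by linarith) (hg N) (by linarith)
      have h2 : σ + ∑ j ∈ Finset.range N, g j + g N
          = σ + ∑ j ∈ Finset.range (N+1), g j := by rw [Finset.sum_range_succ]; ring
      rw [h2] at this
      have h3 : σ + (∑ j ∈ Finset.range N, g j * ε j + g N)
          = σ + ∑ j ∈ Finset.range N, g j * ε j + g N := by ring
      rw [h3]
      linarith

/-- For every permutation τ and every (x, y, z) ∈ H_D, the nonlinear
polymatroid inequality holds: (√σ + ∑ₖ π^σ_{τ,k} x_{τ(k)})² + ∑ᵢ dᵢ yᵢ² ≤ z². -/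
theorem nonlinear_polymatroid_inequality_HD
    (n m : ℕ) (σ : ℝ) (hσ : 0 ≤ σ) (c : Fin n → ℝ) (hc : ∀ i, 0 < c i)
    (d : Fin m → ℝ) (hd : ∀ i, 0 < d i) (τ : Equiv.Perm (Fin n))
    (x : Fin n → ℝ) (y : Fin m → ℝ) (z : ℝ)
    (hx : ∀ i, x i = 0 ∨ x i = 1) (hy : ∀ i, 0 ≤ y i) (hz : 0 ≤ z)
    (hcon : Real.sqrt (σ + ∑ i, c i * x i + ∑ i, d i * y i ^ 2) ≤ z) :
    (Real.sqrt σ +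
        ∑ k, (Real.sqrt (σ + ∑ j ∈ Finset.Iic k, c (τ j)) -
              Real.sqrt (σ + ∑ j ∈ Finset.Iio k, c (τ j))) * x (τ k)) ^ 2
      + ∑ i, d i * y i ^ 2 ≤ z ^ 2 := by
  -- define ℕ-indexed versions
  set g : ℕ → ℝ := fun j => if h : j < n then c (τ ⟨j, h⟩) else 0 with hgdef
  set ε : ℕ → ℝ := fun j => if h : j < n then x (τ ⟨j, h⟩) else 0 with hεdef
  have hg : ∀ j, 0 ≤ g j := by
    intro j; simp only [hgdef]; split
    · exact (hc _).le
    · rfl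
  have hε : ∀ j, ε j = 0 ∨ ε j = 1 := by
    intro j; simp only [hεdef]; split
    · exact hx _
    · left; rfl
  -- Iic sums over Fin n equal range sums over ℕ
  have hIic : ∀ (k : Fin n), (∑ j ∈ Finset.Iic k, c (τ j))
      = ∑ j ∈ Finset.range ((k : ℕ) + 1), g j := by
    intro k
    rw [show Finset.range ((k : ℕ) + 1) = Finset.Iic (k : ℕ) by
      ext j; simp [Nat.lt_succ_iff] ]
    rw [← Fin.map_valEmbedding_Iic, Finset.sum_map]
    apply Finset.sum_congr rfl
    intro j _
    simp [hgdef, j.isLt]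
  have hIio : ∀ (k : Fin n), (∑ j ∈ Finset.Iio k, c (τ j))
      = ∑ j ∈ Finset.range (k : ℕ), g j := by
    intro k
    rw [show Finset.range (k : ℕ) = Finset.Iio (k : ℕ) by ext j; simp ]
    rw [← Fin.map_valEmbedding_Iio, Finset.sum_map]
    apply Finset.sum_congr rfl
    intro j _
    simp [hgdef, j.isLt]
  have hsum1 : (∑ k, (Real.sqrt (σ + ∑ j ∈ Finset.Iic k, c (τ j)) -
              Real.sqrt (σ + ∑ j ∈ Finset.Iio k, c (τ j))) * x (τ k))
      = ∑ k ∈ Finset.range n,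
        (Real.sqrt (σ + ∑ j ∈ Finset.range (k + 1), g j) -
         Real.sqrt (σ + ∑ j ∈ Finset.range k, g j)) * ε k := by
    rw [← Fin.sum_univ_eq_sum_range (fun k : ℕ =>
      (Real.sqrt (σ + ∑ j ∈ Finset.range (k + 1), g j) -
       Real.sqrt (σ + ∑ j ∈ Finset.range k, g j)) * ε k) n]
    apply Finset.sum_congr rfl
    intro k _
    rw [hIic k, hIio k]
    congr 1
    simp [hεdef, k.isLt]
  have hsum2 : (∑ i, c i * x i) = ∑ j ∈ Finset.range n, g j * ε j := by
    rw [← Fin.sum_univ_eq_sum_range (fun j : ℕ => g j * ε j) n]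
    rw [← Equiv.sum_comp τ (fun i => c i * x i)]
    apply Finset.sum_congr rfl
    intro k _
    simp [hgdef, hεdef, k.isLt]
  have hkey := key_lemma σ hσ g ε hg hε n
  rw [← hsum2] at hkey
  rw [hsum1]
  -- nonnegativity of LHS base
  have hbase : 0 ≤ Real.sqrt σ + ∑ k ∈ Finset.range n,
      (Real.sqrt (σ + ∑ j ∈ Finset.range (k + 1), g j) -
       Real.sqrt (σ + ∑ j ∈ Finset.range k, g j)) * ε k := by
    have : 0 ≤ ∑ k ∈ Finset.range n,
        (Real.sqrt (σ + ∑ j ∈ Finset.range (k + 1), g j) -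
         Real.sqrt (σ + ∑ j ∈ Finset.range k, g j)) * ε k := by
      apply Finset.sum_nonneg; intro k _
      apply mul_nonneg
      · have : (σ + ∑ j ∈ Finset.range k, g j) ≤ σ + ∑ j ∈ Finset.range (k+1), g j := by
          rw [Finset.sum_range_succ]; have := hg k; linarith
        linarith [Real.sqrt_le_sqrt this]
      · rcases hε k with h | h <;> simp [h]
    positivity
  have hcx : 0 ≤ ∑ i, c i * x i := by
    apply Finset.sum_nonneg; intro i _
    rcases hx i with h | h <;> simp [h, (hc i).le]
  have hdy : 0 ≤ ∑ i, d i * y i ^ 2 := by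
    apply Finset.sum_nonneg; intro i _; exact mul_nonneg (hd i).le (sq_nonneg _)
  have htot : 0 ≤ σ + ∑ i, c i * x i + ∑ i, d i * y i ^ 2 := by linarith
  have hz2 : σ + ∑ i, c i * x i + ∑ i, d i * y i ^ 2 ≤ z ^ 2 := by
    nlinarith [Real.sq_sqrt htot, Real.sqrt_nonneg (σ + ∑ i, c i * x i + ∑ i, d i * y i ^ 2)]
  have hsq := Real.sq_sqrt (show 0 ≤ σ + ∑ i, c i * x i by linarith)
  nlinarith [hkey, hbase, Real.sqrt_nonneg (σ + ∑ i, c i * x i)]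
end

section
/- The convex hull of U (taken in ℝ^n × ℝ × ℝ^m × ℝ) equals the set of tuples (x, s, y, z) such that (x, s) belongs to the convex hull of K, y_i ≥ 0 for all i, z ≥ 0, and s² + ∑_{i=1}^m d_i y_i² ≤ z². -/
open Finset

/-- Key cone inequality: convex combinations preserve the constraint
`s² + ∑ dᵢ yᵢ² ≤ z²` (with `z ≥ 0`). -/
private lemma cone_add {m : ℕ} {d : Fin m → ℝ} (hd : ∀ i, 0 < d i)
    {s s' z z' a b : ℝ} {y y' : Fin m → ℝ} (hz : 0 ≤ z) (hz' : 0 ≤ z')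
    (ha : 0 ≤ a) (hb : 0 ≤ b)
    (h1 : s ^ 2 + ∑ i, d i * y i ^ 2 ≤ z ^ 2)
    (h2 : s' ^ 2 + ∑ i, d i * y' i ^ 2 ≤ z' ^ 2) :
    (a * s + b * s') ^ 2 + ∑ i, d i * (a * y i + b * y' i) ^ 2 ≤ (a * z + b * z') ^ 2 := by
  set T := ∑ i, d i * y i ^ 2 with hT
  set T' := ∑ i, d i * y' i ^ 2 with hT'
  set C := ∑ i, d i * (y i * y' i) with hCdef
  have hTnn : 0 ≤ T := Finset.sum_nonneg fun i _ => by have := hd i; positivity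
  have hT'nn : 0 ≤ T' := Finset.sum_nonneg fun i _ => by have := hd i; positivity
  have hCS : C ^ 2 ≤ T * T' := by
    have h := Finset.sum_mul_sq_le_sq_mul_sq Finset.univ
      (fun i => Real.sqrt (d i) * y i) (fun i => Real.sqrt (d i) * y' i)
    have e1 : ∑ i, (Real.sqrt (d i) * y i) * (Real.sqrt (d i) * y' i) = C := by
      refine Finset.sum_congr rfl fun i _ => ?_
      have hdd : Real.sqrt (d i) * Real.sqrt (d i) = d i := Real.mul_self_sqrt (hd i).le
      calc (Real.sqrt (d i) * y i) * (Real.sqrt (d i) * y' i)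
          = (Real.sqrt (d i) * Real.sqrt (d i)) * (y i * y' i) := by ring
        _ = d i * (y i * y' i) := by rw [hdd]
    have e2 : ∑ i, (Real.sqrt (d i) * y i) ^ 2 = T := by
      refine Finset.sum_congr rfl fun i _ => ?_
      have hdd : Real.sqrt (d i) * Real.sqrt (d i) = d i := Real.mul_self_sqrt (hd i).le
      calc (Real.sqrt (d i) * y i) ^ 2 = (Real.sqrt (d i) * Real.sqrt (d i)) * y i ^ 2 := by ring
        _ = d i * y i ^ 2 := by rw [hdd]
    have e3 : ∑ i, (Real.sqrt (d i) * y' i) ^ 2 = T' := by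
      refine Finset.sum_congr rfl fun i _ => ?_
      have hdd : Real.sqrt (d i) * Real.sqrt (d i) = d i := Real.mul_self_sqrt (hd i).le
      calc (Real.sqrt (d i) * y' i) ^ 2 = (Real.sqrt (d i) * Real.sqrt (d i)) * y' i ^ 2 := by ring
        _ = d i * y' i ^ 2 := by rw [hdd]
    rwa [e1, e2, e3] at h
  set u := Real.sqrt T with hu
  set v := Real.sqrt T' with hv
  have hun : 0 ≤ u := Real.sqrt_nonneg _
  have hvn : 0 ≤ v := Real.sqrt_nonneg _
  have hu2 : u ^ 2 = T := Real.sq_sqrt hTnn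
  have hv2 : v ^ 2 = T' := Real.sq_sqrt hT'nn
  have hCle : C ≤ u * v := by nlinarith [hCS, hu2, hv2, mul_nonneg hun hvn]
  have hmul : (s ^ 2 + T) * (s' ^ 2 + T') ≤ (z * z') ^ 2 := by
    calc (s ^ 2 + T) * (s' ^ 2 + T') ≤ z ^ 2 * z' ^ 2 :=
          mul_le_mul h1 h2 (by positivity) (sq_nonneg z)
      _ = (z * z') ^ 2 := by ring
  have h3 : (s * s' + u * v) ^ 2 ≤ (z * z') ^ 2 := by
    nlinarith [sq_nonneg (s * v - s' * u), hu2, hv2, hmul]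
  have h4 : s * s' + u * v ≤ z * z' := by
    nlinarith [mul_nonneg hz hz', h3]
  have h5 : s * s' + C ≤ z * z' := by linarith
  have hexp : ∑ i, d i * (a * y i + b * y' i) ^ 2
      = a ^ 2 * T + 2 * (a * b) * C + b ^ 2 * T' := by
    rw [hT, hT', hCdef, Finset.mul_sum, Finset.mul_sum, Finset.mul_sum,
      ← Finset.sum_add_distrib, ← Finset.sum_add_distrib]
    exact Finset.sum_congr rfl fun i _ => by ring
  rw [hexp]
  nlinarith [mul_le_mul_of_nonneg_left h1 (sq_nonneg a),
    mul_le_mul_of_nonneg_left h2 (sq_nonneg b),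
    mul_le_mul_of_nonneg_left h5 (mul_nonneg ha hb)]

/-- The convex hull of U equals the set of tuples (x, s, y, z) such that
(x, s) ∈ conv(K), y ≥ 0, z ≥ 0, and s² + ∑ dᵢ yᵢ² ≤ z². -/
theorem convexHull_U
    (n m : ℕ) (Xb : Set (Fin n → ℝ)) (hXb : ∀ x ∈ Xb, ∀ i, x i = 0 ∨ x i = 1)
    (h : (Fin n → ℝ) → ℝ) (hh : ∀ x ∈ Xb, 0 ≤ h x)
    (d : Fin m → ℝ) (hd : ∀ i, 0 < d i) :
    convexHull ℝ {p : (Fin n → ℝ) × ℝ × (Fin m → ℝ) × ℝ |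
        p.1 ∈ Xb ∧ Real.sqrt (h p.1) ≤ p.2.1 ∧ (∀ i, 0 ≤ p.2.2.1 i) ∧ 0 ≤ p.2.2.2 ∧
        p.2.1 ^ 2 + ∑ i, d i * p.2.2.1 i ^ 2 ≤ p.2.2.2 ^ 2} =
      {p : (Fin n → ℝ) × ℝ × (Fin m → ℝ) × ℝ |
        (p.1, p.2.1) ∈ convexHull ℝ {q : (Fin n → ℝ) × ℝ |
            q.1 ∈ Xb ∧ Real.sqrt (h q.1) ≤ q.2} ∧
        (∀ i, 0 ≤ p.2.2.1 i) ∧ 0 ≤ p.2.2.2 ∧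
        p.2.1 ^ 2 + ∑ i, d i * p.2.2.1 i ^ 2 ≤ p.2.2.2 ^ 2} := by
  apply Set.Subset.antisymm
  · -- conv U ⊆ RHS
    apply convexHull_min
    · rintro ⟨x, s, y, z⟩ ⟨hx, hs, hy, hz, hineq⟩
      exact ⟨subset_convexHull ℝ _ ⟨hx, hs⟩, hy, hz, hineq⟩
    · rintro ⟨x, s, y, z⟩ ⟨hK, hy, hz, hq⟩ ⟨x', s', y', z'⟩ ⟨hK', hy', hz', hq'⟩ a b ha hb hab
      refine ⟨?_, ?_, ?_, ?_⟩
      · exact (convex_convexHull ℝ _) hK hK' ha hb hab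
      · intro i
        show 0 ≤ a * y i + b * y' i
        have := hy i; have := hy' i
        positivity
      · show 0 ≤ a * z + b * z'
        positivity
      · show (a * s + b * s') ^ 2 + ∑ i, d i * (a * y i + b * y' i) ^ 2 ≤ (a * z + b * z') ^ 2
        exact cone_add hd hz hz' ha hb hq hq'
  · -- RHS ⊆ conv U
    rintro ⟨x, s, y, z⟩ ⟨hK, hy, hz, hq⟩
    rw [_root_.convexHull_eq] at hK
    obtain ⟨ι, t, w, f, hw0, hw1, hfK, hcm⟩ := hK
    have hsum : ∑ j ∈ t, w j • f j = (x, s) := by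
      rw [← Finset.centerMass_eq_of_sum_1 _ _ hw1]; exact hcm
    have hxeq : ∑ j ∈ t, w j • (f j).1 = x := by
      have := congrArg Prod.fst hsum
      simpa [Prod.fst_sum] using this
    have hseq : ∑ j ∈ t, w j * (f j).2 = s := by
      have := congrArg (fun p => p.2) hsum
      simpa [Prod.snd_sum] using this
    have hf2nn : ∀ j ∈ t, 0 ≤ (f j).2 := fun j hj =>
      le_trans (Real.sqrt_nonneg _) (hfK j hj).2
    have hterm_nn : ∀ j ∈ t, 0 ≤ w j * (f j).2 := fun j hj =>
      mul_nonneg (hw0 j hj) (hf2nn j hj)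
    have hs_nn : 0 ≤ s := hseq ▸ Finset.sum_nonneg hterm_nn
    set c : ι → ℝ := fun j => if s = 0 then 1 else (f j).2 / s with hc
    set t' : Finset ι := t.filter (fun j => w j ≠ 0) with ht'
    have hmem : ∀ j ∈ t', j ∈ t ∧ w j ≠ 0 := fun j hj => Finset.mem_filter.mp hj
    have hc_nn : ∀ j ∈ t, 0 ≤ c j := by
      intro j hj
      rw [hc]
      by_cases hs0 : s = 0
      · simp [hs0]
      · simp only [hs0, if_false]
        exact div_nonneg (hf2nn j hj) hs_nn
    have hcs : ∀ j ∈ t', (f j).2 = c j * s := by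
      intro j hj
      obtain ⟨hjt, hwj⟩ := hmem j hj
      by_cases hs0 : s = 0
      · have hzero : w j * (f j).2 = 0 := by
          have := (Finset.sum_eq_zero_iff_of_nonneg hterm_nn).mp (by rw [hseq, hs0]) j hjt
          exact this
        have : (f j).2 = 0 := by
          rcases mul_eq_zero.mp hzero with h' | h'
          · exact absurd h' hwj
          · exact h'
        rw [this, hs0, mul_zero]
      · rw [hc]
        simp only [hs0, if_false]
        rw [div_mul_cancel₀ _ hs0]
    have hw1' : ∑ j ∈ t', w j = 1 := by
      rw [ht', Finset.sum_filter_ne_zero, hw1]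
    have hwc : ∑ j ∈ t', w j * c j = 1 := by
      by_cases hs0 : s = 0
      · simp only [hc, hs0, if_true, mul_one]
        exact hw1'
      · simp only [hc, hs0, if_false]
        have : ∑ j ∈ t', w j * ((f j).2 / s) = (∑ j ∈ t', w j * (f j).2) / s := by
          rw [Finset.sum_div]
          exact Finset.sum_congr rfl fun j _ => by ring
        rw [this]
        have hfilter : ∑ j ∈ t', w j * (f j).2 = ∑ j ∈ t, w j * (f j).2 := by
          rw [ht']
          exact Finset.sum_filter_of_ne fun j hj hne => by
            intro hw; rw [hw, zero_mul] at hne; exact hne rfl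
        rw [hfilter, hseq, div_self hs0]
    set g : ι → (Fin n → ℝ) × ℝ × (Fin m → ℝ) × ℝ :=
      fun j => ((f j).1, (f j).2, c j • y, c j * z) with hg
    have hgU : ∀ j ∈ t', g j ∈ {p : (Fin n → ℝ) × ℝ × (Fin m → ℝ) × ℝ |
        p.1 ∈ Xb ∧ Real.sqrt (h p.1) ≤ p.2.1 ∧ (∀ i, 0 ≤ p.2.2.1 i) ∧ 0 ≤ p.2.2.2 ∧
        p.2.1 ^ 2 + ∑ i, d i * p.2.2.1 i ^ 2 ≤ p.2.2.2 ^ 2} := by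
      intro j hj
      obtain ⟨hjt, hwj⟩ := hmem j hj
      refine ⟨(hfK j hjt).1, (hfK j hjt).2, ?_, ?_, ?_⟩
      · intro i
        show 0 ≤ c j * y i
        exact mul_nonneg (hc_nn j hjt) (hy i)
      · exact mul_nonneg (hc_nn j hjt) hz
      · show (f j).2 ^ 2 + ∑ i, d i * (c j * y i) ^ 2 ≤ (c j * z) ^ 2
        rw [hcs j hj]
        have hexp : ∑ i, d i * (c j * y i) ^ 2 = c j ^ 2 * ∑ i, d i * y i ^ 2 := by
          rw [Finset.mul_sum]
          exact Finset.sum_congr rfl fun i _ => by ring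
        rw [hexp]
        nlinarith [mul_le_mul_of_nonneg_left hq (sq_nonneg (c j))]
    have hcm' : t'.centerMass w g = (x, s, y, z) := by
      rw [Finset.centerMass_eq_of_sum_1 _ _ hw1']
      have h1 : (∑ j ∈ t', w j • g j).1 = x := by
        rw [Prod.fst_sum]
        simp only [hg, Prod.smul_fst]
        rw [ht']
        rw [Finset.sum_filter_of_ne (fun j hj hne => by
          intro hw; rw [hw, zero_smul] at hne; exact hne rfl)]
        exact hxeq
      have h2 : (∑ j ∈ t', w j • g j).2.1 = s := by
        rw [Prod.snd_sum, Prod.fst_sum]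
        simp only [hg, Prod.smul_snd, Prod.smul_fst, smul_eq_mul]
        rw [ht']
        rw [Finset.sum_filter_of_ne (fun j hj hne => by
          intro hw; rw [hw, zero_mul] at hne; exact hne rfl)]
        exact hseq
      have h3 : (∑ j ∈ t', w j • g j).2.2.1 = y := by
        rw [Prod.snd_sum, Prod.snd_sum, Prod.fst_sum]
        simp only [hg, Prod.smul_snd, Prod.smul_fst]
        have : ∀ j ∈ t', w j • c j • y = (w j * c j) • y := fun j _ => smul_smul _ _ _
        rw [Finset.sum_congr rfl this, ← Finset.sum_smul, hwc, one_smul]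
      have h4 : (∑ j ∈ t', w j • g j).2.2.2 = z := by
        rw [Prod.snd_sum, Prod.snd_sum, Prod.snd_sum]
        simp only [hg, Prod.smul_snd, smul_eq_mul]
        have : ∀ j ∈ t', w j * (c j * z) = (w j * c j) * z := fun j _ => by ring
        rw [Finset.sum_congr rfl this, ← Finset.sum_mul, hwc, one_mul]
      exact Prod.ext h1 (Prod.ext h2 (Prod.ext h3 h4))
    rw [← hcm']
    exact Finset.centerMass_mem_convexHull t' (fun j hj => hw0 j (hmem j hj).1)
      (by rw [hw1']; exact one_pos) hgU
end

section
/- The convex hull of U_R (taken in ℝ^n × ℝ × ℝ^m × ℝ × ℝ) equals the set of tuples (x, s, y, w, z) such that (x, s) belongs to the convex hull of K, y_i ≥ 0 for all i, w ≥ 0, z ≥ 0, and s² + ∑_{i=1}^m d_i y_i² ≤ 4wz. -/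
lemma cs_aux (s₁ s₂ Q₁ Q₂ P : ℝ) (hQ₁ : 0 ≤ Q₁) (hQ₂ : 0 ≤ Q₂) (hP : P ^ 2 ≤ Q₁ * Q₂) :
    (s₁ * s₂ + P) ^ 2 ≤ (s₁ ^ 2 + Q₁) * (s₂ ^ 2 + Q₂) := by
  rcases eq_or_lt_of_le hQ₂ with hQ | hQ
  · have hP0 : P = 0 := by nlinarith [sq_nonneg P]
    subst hP0
    nlinarith [sq_nonneg s₂, mul_nonneg (sq_nonneg s₂) hQ₁]
  · nlinarith [sq_nonneg (s₁ * Q₂ - s₂ * P), mul_nonneg (sq_nonneg s₂) (sub_nonneg.mpr hP),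
      mul_nonneg hQ₂ (sub_nonneg.mpr hP)]

lemma cone_key (s₁ s₂ Q₁ Q₂ P w₁ w₂ z₁ z₂ a b : ℝ) (hQ₁ : 0 ≤ Q₁) (hQ₂ : 0 ≤ Q₂)
    (hP : P ^ 2 ≤ Q₁ * Q₂) (hw₁ : 0 ≤ w₁) (hw₂ : 0 ≤ w₂) (hz₁ : 0 ≤ z₁) (hz₂ : 0 ≤ z₂)
    (h₁ : s₁ ^ 2 + Q₁ ≤ 4 * w₁ * z₁) (h₂ : s₂ ^ 2 + Q₂ ≤ 4 * w₂ * z₂)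
    (ha : 0 ≤ a) (hb : 0 ≤ b) :
    (a * s₁ + b * s₂) ^ 2 + (a ^ 2 * Q₁ + 2 * (a * b) * P + b ^ 2 * Q₂) ≤
      4 * (a * w₁ + b * w₂) * (a * z₁ + b * z₂) := by
  have hA : s₁ * s₂ + P ≤ 2 * (w₁ * z₂ + w₂ * z₁) := by
    have h3 : (s₁ * s₂ + P) ^ 2 ≤ (4 * w₁ * z₁) * (4 * w₂ * z₂) :=
      le_trans (cs_aux s₁ s₂ Q₁ Q₂ P hQ₁ hQ₂ hP)
        (mul_le_mul h₁ h₂ (by positivity) (by positivity))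
    nlinarith [sq_nonneg (w₁ * z₂ - w₂ * z₁), mul_nonneg hw₁ hz₂, mul_nonneg hw₂ hz₁]
  nlinarith [mul_le_mul_of_nonneg_left h₁ (sq_nonneg a),
    mul_le_mul_of_nonneg_left h₂ (sq_nonneg b),
    mul_le_mul_of_nonneg_left hA (mul_nonneg ha hb)]

/-- Auxiliary affine map used to lift points of `K` into the rotated cone set. -/
noncomputable def auxMap (n m : ℕ) (α : Fin m → ℝ) (β γ : ℝ) (yc : Fin m → ℝ) (wc zc : ℝ) :
    ((Fin n → ℝ) × ℝ) →ᵃ[ℝ] ((Fin n → ℝ) × ℝ × (Fin m → ℝ) × ℝ × ℝ) where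
  toFun q := (q.1, q.2, q.2 • α + yc, q.2 * β + wc, q.2 * γ + zc)
  linear :=
    { toFun := fun q => (q.1, q.2, q.2 • α, q.2 * β, q.2 * γ)
      map_add' := fun u v => by
        simp [Prod.ext_iff, add_smul, add_mul]
      map_smul' := fun c u => by
        simp [Prod.ext_iff, mul_smul, mul_assoc] }
  map_vadd' := fun u v => by
    simp [Prod.ext_iff, add_smul, add_mul, add_assoc]


/-- The convex hull of the rotated-cone set U_R equals the set of tuples
(x, s, y, w, z) with (x, s) ∈ conv(K), y ≥ 0, w ≥ 0, z ≥ 0, and s² + ∑ dᵢ yᵢ² ≤ 4wz. -/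
theorem convexHull_UR
    (n m : ℕ) (Xb : Set (Fin n → ℝ)) (hXb : ∀ x ∈ Xb, ∀ i, x i = 0 ∨ x i = 1)
    (h : (Fin n → ℝ) → ℝ) (hh : ∀ x ∈ Xb, 0 ≤ h x)
    (d : Fin m → ℝ) (hd : ∀ i, 0 < d i) :
    convexHull ℝ {p : (Fin n → ℝ) × ℝ × (Fin m → ℝ) × ℝ × ℝ |
        p.1 ∈ Xb ∧ Real.sqrt (h p.1) ≤ p.2.1 ∧ (∀ i, 0 ≤ p.2.2.1 i) ∧
        0 ≤ p.2.2.2.1 ∧ 0 ≤ p.2.2.2.2 ∧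
        p.2.1 ^ 2 + ∑ i, d i * p.2.2.1 i ^ 2 ≤ 4 * p.2.2.2.1 * p.2.2.2.2} =
      {p : (Fin n → ℝ) × ℝ × (Fin m → ℝ) × ℝ × ℝ |
        (p.1, p.2.1) ∈ convexHull ℝ {q : (Fin n → ℝ) × ℝ |
            q.1 ∈ Xb ∧ Real.sqrt (h q.1) ≤ q.2} ∧
        (∀ i, 0 ≤ p.2.2.1 i) ∧ 0 ≤ p.2.2.2.1 ∧ 0 ≤ p.2.2.2.2 ∧
        p.2.1 ^ 2 + ∑ i, d i * p.2.2.1 i ^ 2 ≤ 4 * p.2.2.2.1 * p.2.2.2.2} := by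
  set K : Set ((Fin n → ℝ) × ℝ) := {q | q.1 ∈ Xb ∧ Real.sqrt (h q.1) ≤ q.2} with hKdef
  apply Set.Subset.antisymm
  · apply convexHull_min
    · rintro p ⟨h1, h2, h3, h4, h5, h6⟩
      exact ⟨subset_convexHull ℝ K ⟨h1, h2⟩, h3, h4, h5, h6⟩
    · rintro p ⟨hp1, hpy, hpw, hpz, hpc⟩ q ⟨hq1, hqy, hqw, hqz, hqc⟩ a b ha hb hab
      refine ⟨?_, fun i => ?_, ?_, ?_, ?_⟩
      · exact (convex_convexHull ℝ K) hp1 hq1 ha hb hab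
      · show 0 ≤ a * p.2.2.1 i + b * q.2.2.1 i
        exact add_nonneg (mul_nonneg ha (hpy i)) (mul_nonneg hb (hqy i))
      · show 0 ≤ a * p.2.2.2.1 + b * q.2.2.2.1
        exact add_nonneg (mul_nonneg ha hpw) (mul_nonneg hb hqw)
      · show 0 ≤ a * p.2.2.2.2 + b * q.2.2.2.2
        exact add_nonneg (mul_nonneg ha hpz) (mul_nonneg hb hqz)
      · show (a * p.2.1 + b * q.2.1) ^ 2 +
            ∑ i, d i * (a * p.2.2.1 i + b * q.2.2.1 i) ^ 2 ≤
            4 * (a * p.2.2.2.1 + b * q.2.2.2.1) * (a * p.2.2.2.2 + b * q.2.2.2.2)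
        rw [Finset.sum_congr rfl (fun i _ =>
          (by ring : d i * (a * p.2.2.1 i + b * q.2.2.1 i) ^ 2 =
            a ^ 2 * (d i * p.2.2.1 i ^ 2) + 2 * (a * b) * (d i * (p.2.2.1 i * q.2.2.1 i)) +
              b ^ 2 * (d i * q.2.2.1 i ^ 2))),
          Finset.sum_add_distrib, Finset.sum_add_distrib,
          ← Finset.mul_sum, ← Finset.mul_sum, ← Finset.mul_sum]
        have hcs : (∑ i, d i * (p.2.2.1 i * q.2.2.1 i)) ^ 2 ≤
            (∑ i, d i * p.2.2.1 i ^ 2) * (∑ i, d i * q.2.2.1 i ^ 2) := by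
          have base := Finset.sum_mul_sq_le_sq_mul_sq Finset.univ
            (fun i => Real.sqrt (d i) * p.2.2.1 i) (fun i => Real.sqrt (d i) * q.2.2.1 i)
          have e1 : ∀ i ∈ Finset.univ, (Real.sqrt (d i) * p.2.2.1 i) *
              (Real.sqrt (d i) * q.2.2.1 i) = d i * (p.2.2.1 i * q.2.2.1 i) := by
            intro i _
            rw [show (Real.sqrt (d i) * p.2.2.1 i) * (Real.sqrt (d i) * q.2.2.1 i) =
              (Real.sqrt (d i) * Real.sqrt (d i)) * (p.2.2.1 i * q.2.2.1 i) from by ring,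
              Real.mul_self_sqrt (hd i).le]
          have e2 : ∀ (v : Fin m → ℝ), ∀ i ∈ Finset.univ,
              (Real.sqrt (d i) * v i) ^ 2 = d i * v i ^ 2 := by
            intro v i _
            rw [mul_pow, Real.sq_sqrt (hd i).le]
          rw [Finset.sum_congr rfl e1, Finset.sum_congr rfl (e2 _),
            Finset.sum_congr rfl (e2 _)] at base
          exact base
        exact cone_key _ _ _ _ _ _ _ _ _ a b
          (Finset.sum_nonneg fun i _ => mul_nonneg (hd i).le (sq_nonneg _))
          (Finset.sum_nonneg fun i _ => mul_nonneg (hd i).le (sq_nonneg _))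
          hcs hpw hqw hpz hqz hpc hqc ha hb
  · rintro ⟨x, s, y, w, z⟩ ⟨hK, hy, hw, hz, hc⟩
    have hs0 : 0 ≤ s := by
      have hsub : convexHull ℝ K ⊆ {q : (Fin n → ℝ) × ℝ | 0 ≤ q.2} := by
        apply convexHull_min
        · exact fun q hq => (Real.sqrt_nonneg _).trans hq.2
        · intro u hu v hv a b ha hb hab
          show (0 : ℝ) ≤ a * u.2 + b * v.2
          exact add_nonneg (mul_nonneg ha hu) (mul_nonneg hb hv)
      exact hsub hK
    rcases hs0.eq_or_lt with hs | hs
    · -- s = 0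
      subst hs
      have hFK : (auxMap n m 0 (1/2) (1/2) y w z) '' K ⊆
          {p : (Fin n → ℝ) × ℝ × (Fin m → ℝ) × ℝ × ℝ |
            p.1 ∈ Xb ∧ Real.sqrt (h p.1) ≤ p.2.1 ∧ (∀ i, 0 ≤ p.2.2.1 i) ∧
            0 ≤ p.2.2.2.1 ∧ 0 ≤ p.2.2.2.2 ∧
            p.2.1 ^ 2 + ∑ i, d i * p.2.2.1 i ^ 2 ≤ 4 * p.2.2.2.1 * p.2.2.2.2} := by
        rintro _ ⟨q, hq, rfl⟩
        have hq2 : 0 ≤ q.2 := (Real.sqrt_nonneg _).trans hq.2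
        refine ⟨hq.1, hq.2, fun i => ?_, ?_, ?_, ?_⟩
        · show 0 ≤ (q.2 • (0 : Fin m → ℝ) + y) i
          simpa using hy i
        · show 0 ≤ q.2 * (1/2) + w
          positivity
        · show 0 ≤ q.2 * (1/2) + z
          positivity
        · show q.2 ^ 2 + ∑ i, d i * ((q.2 • (0 : Fin m → ℝ) + y) i) ^ 2 ≤
            4 * (q.2 * (1/2) + w) * (q.2 * (1/2) + z)
          have hyy : ∀ i ∈ Finset.univ, d i * ((q.2 • (0 : Fin m → ℝ) + y) i) ^ 2
              = d i * y i ^ 2 := by intro i _; simp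
          rw [Finset.sum_congr rfl hyy]
          have hc' : (0:ℝ) ^ 2 + ∑ i, d i * y i ^ 2 ≤ 4 * w * z := hc
          nlinarith [mul_nonneg hq2 hw, mul_nonneg hq2 hz, sq_nonneg q.2]
      have hFeq : (auxMap n m 0 (1/2) (1/2) y w z) (x, (0:ℝ)) = (x, 0, y, w, z) := by
        show ((x, (0:ℝ), (0:ℝ) • (0 : Fin m → ℝ) + y, (0:ℝ) * (1/2) + w,
          (0:ℝ) * (1/2) + z) : _) = (x, 0, y, w, z)
        simp
      have hmem : ((x, 0, y, w, z) : (Fin n → ℝ) × ℝ × (Fin m → ℝ) × ℝ × ℝ) ∈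
          (auxMap n m 0 (1/2) (1/2) y w z) '' (convexHull ℝ K) := ⟨(x, 0), hK, hFeq⟩
      rw [AffineMap.image_convexHull] at hmem
      exact convexHull_mono hFK hmem
    · -- 0 < s
      have hFK : (auxMap n m (s⁻¹ • y) (w/s) (z/s) 0 0 0) '' K ⊆
          {p : (Fin n → ℝ) × ℝ × (Fin m → ℝ) × ℝ × ℝ |
            p.1 ∈ Xb ∧ Real.sqrt (h p.1) ≤ p.2.1 ∧ (∀ i, 0 ≤ p.2.2.1 i) ∧
            0 ≤ p.2.2.2.1 ∧ 0 ≤ p.2.2.2.2 ∧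
            p.2.1 ^ 2 + ∑ i, d i * p.2.2.1 i ^ 2 ≤ 4 * p.2.2.2.1 * p.2.2.2.2} := by
        rintro _ ⟨q, hq, rfl⟩
        have hq2 : 0 ≤ q.2 := (Real.sqrt_nonneg _).trans hq.2
        refine ⟨hq.1, hq.2, fun i => ?_, ?_, ?_, ?_⟩
        · show 0 ≤ (q.2 • (s⁻¹ • y) + 0) i
          simp only [Pi.add_apply, Pi.smul_apply, Pi.zero_apply, add_zero, smul_eq_mul]
          exact mul_nonneg hq2 (mul_nonneg (inv_nonneg.mpr hs0) (hy i))
        · show 0 ≤ q.2 * (w/s) + 0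
          positivity
        · show 0 ≤ q.2 * (z/s) + 0
          positivity
        · show q.2 ^ 2 + ∑ i, d i * ((q.2 • (s⁻¹ • y) + 0) i) ^ 2 ≤
            4 * (q.2 * (w/s) + 0) * (q.2 * (z/s) + 0)
          have hsumq : ∑ i, d i * ((q.2 • (s⁻¹ • y) + 0) i) ^ 2 =
              (q.2/s) ^ 2 * ∑ i, d i * y i ^ 2 := by
            rw [Finset.mul_sum]
            apply Finset.sum_congr rfl
            intro i _
            have e : (q.2 • (s⁻¹ • y) + 0) i = q.2 * (s⁻¹ * y i) := by simp
            rw [e, div_eq_mul_inv]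
            ring
          rw [hsumq]
          have h4 := mul_le_mul_of_nonneg_left hc (sq_nonneg (q.2/s))
          rw [mul_add] at h4
          have e1 : (q.2/s) ^ 2 * s ^ 2 = q.2 ^ 2 := by
            field_simp
          rw [e1] at h4
          have e2 : 4 * (q.2 * (w/s) + 0) * (q.2 * (z/s) + 0) = (q.2/s) ^ 2 * (4 * w * z) := by
            field_simp
            ring
          rw [e2]
          exact h4
      have hFeq : (auxMap n m (s⁻¹ • y) (w/s) (z/s) 0 0 0) (x, s) = (x, s, y, w, z) := by
        show ((x, s, s • (s⁻¹ • y) + 0, s * (w/s) + 0, s * (z/s) + 0) : _) = (x, s, y, w, z)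
        rw [smul_smul, mul_inv_cancel₀ (ne_of_gt hs), one_smul, add_zero, add_zero, add_zero,
          mul_div_cancel₀ _ (ne_of_gt hs), mul_div_cancel₀ _ (ne_of_gt hs)]
      have hmem : ((x, s, y, w, z) : (Fin n → ℝ) × ℝ × (Fin m → ℝ) × ℝ × ℝ) ∈
          (auxMap n m (s⁻¹ • y) (w/s) (z/s) 0 0 0) '' (convexHull ℝ K) := ⟨(x, s), hK, hFeq⟩
      rw [AffineMap.image_convexHull] at hmem
      exact convexHull_mono hFK hmem
end

section
/- The convex hull of S (taken in ℝ^n × ℝ × ℝ) equals the set of triples (x, w, z) with 0 ≤ x_i ≤ 1 for all i, w ≥ 0, z ≥ 0, and, for every permutation τ of {1,…,n}, (∑_{k=1}^n γ_{τ,k} · x_{τ(k)})² ≤ 4wz, where γ_{τ,k} = 2·((∑_{j=1}^{k} c_{τ(j)})^{1/4} − (∑_{j=1}^{k−1} c_{τ(j)})^{1/4}). -/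
open Finset

noncomputable def qr (t : ℝ) : ℝ := Real.sqrt (Real.sqrt t)

lemma qr_nonneg (t : ℝ) : 0 ≤ qr t := Real.sqrt_nonneg _

lemma qr_zero : qr 0 = 0 := by simp [qr]

lemma qr_mono {a b : ℝ} (h : a ≤ b) : qr a ≤ qr b :=
  Real.sqrt_le_sqrt (Real.sqrt_le_sqrt h)

lemma sq_qr (t : ℝ) : qr t ^ 2 = Real.sqrt t := Real.sq_sqrt (Real.sqrt_nonneg t)

lemma qr_pos {t : ℝ} (h : 0 < t) : 0 < qr t := Real.sqrt_pos.mpr (Real.sqrt_pos.mpr h)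

lemma sqrt_inc {a b t : ℝ} (ha : 0 ≤ a) (hab : a ≤ b) (ht : 0 ≤ t) :
    Real.sqrt (b + t) - Real.sqrt b ≤ Real.sqrt (a + t) - Real.sqrt a := by
  have hb : 0 ≤ b := ha.trans hab
  have h1 : Real.sqrt a ^ 2 = a := Real.sq_sqrt ha
  have h2 : Real.sqrt b ^ 2 = b := Real.sq_sqrt hb
  have h3 : Real.sqrt (a + t) ^ 2 = a + t := Real.sq_sqrt (by linarith)
  have h4 : Real.sqrt (b + t) ^ 2 = b + t := Real.sq_sqrt (by linarith)
  have n1 := Real.sqrt_nonneg a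
  have n2 := Real.sqrt_nonneg b
  have n3 := Real.sqrt_nonneg (a + t)
  have n4 := Real.sqrt_nonneg (b + t)
  -- key : sqrt(b+t)*sqrt a ≤ sqrt(a+t)*sqrt b
  have key : Real.sqrt (b + t) * Real.sqrt a ≤ Real.sqrt (a + t) * Real.sqrt b := by
    have hsq : (Real.sqrt (b + t) * Real.sqrt a) ^ 2 ≤ (Real.sqrt (a + t) * Real.sqrt b) ^ 2 := by
      have : (b + t) * a ≤ (a + t) * b := by nlinarith
      calc (Real.sqrt (b + t) * Real.sqrt a) ^ 2 = (b + t) * a := by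
            rw [mul_pow, h4, h1]
        _ ≤ (a + t) * b := this
        _ = (Real.sqrt (a + t) * Real.sqrt b) ^ 2 := by rw [mul_pow, h3, h2]
    nlinarith [mul_nonneg n4 n1, mul_nonneg n3 n2]
  -- now (sqrt(b+t)+sqrt a)^2 ≤ (sqrt(a+t)+sqrt b)^2
  have hsq2 : (Real.sqrt (b + t) + Real.sqrt a) ^ 2 ≤ (Real.sqrt (a + t) + Real.sqrt b) ^ 2 := by
    nlinarith
  nlinarith [add_nonneg n4 n1, add_nonneg n3 n2]

lemma qr_inc {a b t : ℝ} (ha : 0 ≤ a) (hab : a ≤ b) (ht : 0 ≤ t) :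
    qr (b + t) - qr b ≤ qr (a + t) - qr a := by
  have hb : 0 ≤ b := ha.trans hab
  have h1 := sqrt_inc ha hab ht
  set u := Real.sqrt a with hu
  set v := Real.sqrt b with hv
  have hu0 : 0 ≤ u := Real.sqrt_nonneg a
  have hv0 : 0 ≤ v := Real.sqrt_nonneg b
  have huv : u ≤ v := Real.sqrt_le_sqrt hab
  set t' := Real.sqrt (a + t) - u with ht'
  have ht'0 : 0 ≤ t' := by
    have : u ≤ Real.sqrt (a + t) := Real.sqrt_le_sqrt (by linarith)
    simp [ht']; linarith
  have e1 : Real.sqrt (a + t) = u + t' := by ring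
  have hle : Real.sqrt (b + t) ≤ v + t' := by linarith
  have step1 : qr (b + t) ≤ Real.sqrt (v + t') := Real.sqrt_le_sqrt hle
  have step2 : Real.sqrt (v + t') - Real.sqrt v ≤ Real.sqrt (u + t') - Real.sqrt u :=
    sqrt_inc hu0 huv ht'0
  have : qr (a + t) = Real.sqrt (u + t') := by rw [qr, e1]
  simp only [qr] at *
  rw [this]
  linarith

noncomputable def pad (n : ℕ) (g : Fin n → ℝ) (j : ℕ) : ℝ :=
  if h : j < n then g ⟨j, h⟩ else 0

lemma sum_Iic_pad {n : ℕ} (g : Fin n → ℝ) (k : Fin n) :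
    ∑ j ∈ Finset.Iic k, g j = ∑ j ∈ Finset.range (k + 1), pad n g j := by
  rw [Finset.sum_bij' (fun (j : Fin n) _ => (j : ℕ))
      (fun (j : ℕ) (hj : j ∈ Finset.range (k + 1)) =>
        (⟨j, lt_of_le_of_lt (Nat.lt_succ_iff.mp (Finset.mem_range.mp hj)) k.isLt⟩ : Fin n))]
  · intro a ha
    simp only [Finset.mem_Iic, Fin.le_def] at ha
    exact Finset.mem_range.mpr (Nat.lt_succ_iff.mpr ha)
  · intro a ha
    simp only [Finset.mem_range] at ha
    simp only [Finset.mem_Iic, Fin.le_def]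
    exact Nat.lt_succ_iff.mp ha
  · intro a ha; simp
  · intro a ha; simp
  · intro a ha
    simp [pad, a.isLt]

lemma sum_Iio_pad {n : ℕ} (g : Fin n → ℝ) (k : Fin n) :
    ∑ j ∈ Finset.Iio k, g j = ∑ j ∈ Finset.range k, pad n g j := by
  rw [Finset.sum_bij' (fun (j : Fin n) _ => (j : ℕ))
      (fun (j : ℕ) (hj : j ∈ Finset.range k) =>
        (⟨j, lt_trans (Finset.mem_range.mp hj) k.isLt⟩ : Fin n))]
  · intro a ha
    simp only [Finset.mem_Iio, Fin.lt_def] at ha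
    exact Finset.mem_range.mpr ha
  · intro a ha
    simp only [Finset.mem_range] at ha
    simp only [Finset.mem_Iio, Fin.lt_def]
    exact ha
  · intro a ha; simp
  · intro a ha; simp
  · intro a ha
    simp [pad, a.isLt]

lemma sum_univ_pad {n : ℕ} (g : Fin n → ℝ) :
    ∑ j, g j = ∑ j ∈ Finset.range n, pad n g j := by
  rw [Finset.sum_range]
  apply Finset.sum_congr rfl
  intro i _
  simp [pad, i.isLt]


lemma key_sum (d y : ℕ → ℝ) (hd : ∀ j, 0 ≤ d j) (hy : ∀ j, y j = 0 ∨ y j = 1) :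
    ∀ m : ℕ, ∑ k ∈ Finset.range m,
        (qr (∑ j ∈ Finset.range (k + 1), d j) - qr (∑ j ∈ Finset.range k, d j)) * y k
      ≤ qr (∑ k ∈ Finset.range m, d k * y k) := by
  intro m
  induction m with
  | zero => simpa using le_of_eq qr_zero.symm
  | succ m ih =>
    have hB0 : 0 ≤ ∑ k ∈ Finset.range m, d k * y k := by
      apply Finset.sum_nonneg; intro j _
      rcases hy j with h | h <;> simp [h, hd j]
    have hBA : ∑ k ∈ Finset.range m, d k * y k ≤ ∑ j ∈ Finset.range m, d j := by
      apply Finset.sum_le_sum; intro j _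
      rcases hy j with h | h <;> simp [h, hd j]
    rw [Finset.sum_range_succ, Finset.sum_range_succ (fun k => d k * y k)]
    rcases hy m with h | h
    · simp only [h, mul_zero, mul_one, add_zero]
      exact ih
    · simp only [h, mul_one]
      have hs : ∑ j ∈ Finset.range (m + 1), d j = ∑ j ∈ Finset.range m, d j + d m :=
        Finset.sum_range_succ d m
      rw [hs]
      have hstep := qr_inc hB0 hBA (hd m)
      have : qr (∑ j ∈ Finset.range m, d j + d m) - qr (∑ j ∈ Finset.range m, d j)
          ≤ qr ((∑ k ∈ Finset.range m, d k * y k) + d m) - qr (∑ k ∈ Finset.range m, d k * y k) :=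
        hstep
      linarith [ih]

lemma quad_combo {L1 L2 w1 w2 z1 z2 a b : ℝ} (hL1 : 0 ≤ L1) (hL2 : 0 ≤ L2)
    (hw1 : 0 ≤ w1) (hz1 : 0 ≤ z1) (hw2 : 0 ≤ w2) (hz2 : 0 ≤ z2)
    (h1 : L1 ^ 2 ≤ 4 * w1 * z1) (h2 : L2 ^ 2 ≤ 4 * w2 * z2)
    (ha : 0 ≤ a) (hb : 0 ≤ b) :
    (a * L1 + b * L2) ^ 2 ≤ 4 * (a * w1 + b * w2) * (a * z1 + b * z2) := by
  have hx : (L1 * L2) ^ 2 ≤ (2 * (w1 * z2 + w2 * z1)) ^ 2 := by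
    nlinarith [sq_nonneg (w1 * z2 - w2 * z1), mul_nonneg hw1 hz1, mul_nonneg hw2 hz2,
      mul_nonneg (mul_nonneg hw1 hz1) (mul_nonneg hw2 hz2), sq_nonneg (L1 * L2),
      mul_le_mul h1 h2 (sq_nonneg L2) (by nlinarith [mul_nonneg hw1 hz1])]
  have hcross : L1 * L2 ≤ 2 * (w1 * z2 + w2 * z1) := by
    have hLL : 0 ≤ L1 * L2 := mul_nonneg hL1 hL2
    have hY : 0 ≤ 2 * (w1 * z2 + w2 * z1) := by positivity
    nlinarith [hx, hLL, hY]
  nlinarith [mul_nonneg (mul_nonneg ha ha) (by linarith : (0:ℝ) ≤ 4 * w1 * z1 - L1 ^ 2),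
    mul_nonneg (mul_nonneg hb hb) (by linarith : (0:ℝ) ≤ 4 * w2 * z2 - L2 ^ 2),
    mul_nonneg (mul_nonneg ha hb) (by linarith : (0:ℝ) ≤ 2 * (w1 * z2 + w2 * z1) - L1 * L2)]

-- Direction 1 plus skeleton
/-- The convex hull of the Sharpe-ratio set S equals the set of triples
(x, w, z) with 0 ≤ xᵢ ≤ 1, w ≥ 0, z ≥ 0, and for every permutation τ,
(∑ₖ γ_{τ,k} x_{τ(k)})² ≤ 4wz, where γ_{τ,k} is built from fourth roots. -/
theorem convexHull_Sharpe
    (n : ℕ) (c : Fin n → ℝ) (hc : ∀ i, 0 < c i) :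
    convexHull ℝ {p : (Fin n → ℝ) × ℝ × ℝ |
        (∀ i, p.1 i = 0 ∨ p.1 i = 1) ∧ 0 ≤ p.2.1 ∧ 0 ≤ p.2.2 ∧
        Real.sqrt (∑ i, c i * p.1 i) ≤ p.2.1 * p.2.2} =
      {p : (Fin n → ℝ) × ℝ × ℝ |
        (∀ i, 0 ≤ p.1 i ∧ p.1 i ≤ 1) ∧ 0 ≤ p.2.1 ∧ 0 ≤ p.2.2 ∧
        ∀ τ : Equiv.Perm (Fin n),
          (∑ k, (2 * (Real.sqrt (Real.sqrt (∑ j ∈ Finset.Iic k, c (τ j))) -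
                      Real.sqrt (Real.sqrt (∑ j ∈ Finset.Iio k, c (τ j))))) * p.1 (τ k)) ^ 2
            ≤ 4 * p.2.1 * p.2.2} := by
  have hγ : ∀ (τ : Equiv.Perm (Fin n)) (k : Fin n),
      0 ≤ 2 * (qr (∑ j ∈ Finset.Iic k, c (τ j)) - qr (∑ j ∈ Finset.Iio k, c (τ j))) := by
    intro τ k
    have hsub : ∑ j ∈ Finset.Iio k, c (τ j) ≤ ∑ j ∈ Finset.Iic k, c (τ j) := by
      apply Finset.sum_le_sum_of_subset_of_nonneg
      · intro j hj
        simp only [Finset.mem_Iio] at hj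
        simp only [Finset.mem_Iic]
        exact le_of_lt hj
      · intro j _ _; exact (hc (τ j)).le
    have := qr_mono hsub
    linarith
  apply Set.Subset.antisymm
  · apply convexHull_min
    · -- S ⊆ RHS
      rintro ⟨x, w, z⟩ ⟨hx, hw, hz, hs⟩
      refine ⟨fun i => ?_, hw, hz, fun τ => ?_⟩
      · have h : x i = 0 ∨ x i = 1 := hx i
        rcases h with h | h <;> simp [h]
      · set d : ℕ → ℝ := pad n (fun j => c (τ j)) with hd
        set y : ℕ → ℝ := pad n (fun j => x (τ j)) with hy
        have hd0 : ∀ j, 0 ≤ d j := by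
          intro j; simp only [hd, pad]; split
          · exact (hc _).le
          · exact le_rfl
        have hy01 : ∀ j, y j = 0 ∨ y j = 1 := by
          intro j; simp only [hy, pad]; split
          · exact hx _
          · exact Or.inl rfl
        have hL : (∑ k, (2 * (qr (∑ j ∈ Finset.Iic k, c (τ j)) -
              qr (∑ j ∈ Finset.Iio k, c (τ j)))) * x (τ k))
            = 2 * ∑ k ∈ Finset.range n,
              (qr (∑ j ∈ Finset.range (k + 1), d j) - qr (∑ j ∈ Finset.range k, d j)) * y k := by
          rw [sum_univ_pad (fun k => (2 * (qr (∑ j ∈ Finset.Iic k, c (τ j)) -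
            qr (∑ j ∈ Finset.Iio k, c (τ j)))) * x (τ k)), Finset.mul_sum]
          apply Finset.sum_congr rfl
          intro k hk
          have hkn : k < n := Finset.mem_range.mp hk
          simp only [pad, dif_pos hkn]
          rw [sum_Iic_pad (fun j => c (τ j)) ⟨k, hkn⟩, sum_Iio_pad (fun j => c (τ j)) ⟨k, hkn⟩]
          simp only [hd, hy, pad, dif_pos hkn]
          ring
        have hQ : ∑ k ∈ Finset.range n, d k * y k = ∑ i, c i * x i := by
          rw [show (∑ i, c i * x i) = ∑ k, c (τ k) * x (τ k) from
            (Equiv.sum_comp τ (fun i => c i * x i)).symm]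
          rw [sum_univ_pad (fun k => c (τ k) * x (τ k))]
          apply Finset.sum_congr rfl
          intro k hk
          have hkn : k < n := Finset.mem_range.mp hk
          simp only [pad, hd, hy, dif_pos hkn]
        have hT := key_sum d y hd0 hy01 n
        rw [hQ] at hT
        have hT0 : 0 ≤ ∑ k ∈ Finset.range n,
            (qr (∑ j ∈ Finset.range (k + 1), d j) - qr (∑ j ∈ Finset.range k, d j)) * y k := by
          apply Finset.sum_nonneg
          intro k _
          apply mul_nonneg
          · have : ∑ j ∈ Finset.range k, d j ≤ ∑ j ∈ Finset.range (k + 1), d j := by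
              rw [Finset.sum_range_succ]; linarith [hd0 k]
            linarith [qr_mono this]
          · rcases hy01 k with h | h <;> simp [h]
        show (∑ k, (2 * (qr (∑ j ∈ Finset.Iic k, c (τ j)) -
            qr (∑ j ∈ Finset.Iio k, c (τ j)))) * x (τ k)) ^ 2 ≤ 4 * w * z
        rw [hL]
        have hsq : (∑ k ∈ Finset.range n,
            (qr (∑ j ∈ Finset.range (k + 1), d j) - qr (∑ j ∈ Finset.range k, d j)) * y k) ^ 2
            ≤ qr (∑ i, c i * x i) ^ 2 := by
          apply pow_le_pow_left₀ hT0 hT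
        rw [sq_qr] at hsq
        nlinarith [hs]
    · -- RHS convex
      rintro ⟨x1, w1, z1⟩ h1 ⟨x2, w2, z2⟩ h2 a b ha hb hab
      obtain ⟨hx1, hw1, hz1, hq1⟩ := h1
      obtain ⟨hx2, hw2, hz2, hq2⟩ := h2
      simp only [Set.mem_setOf_eq] at *
      refine ⟨fun i => ?_, ?_, ?_, fun τ => ?_⟩
      · simp only [Prod.smul_mk, Prod.mk_add_mk, smul_eq_mul, Pi.add_apply, Pi.smul_apply,
          smul_eq_mul]
        constructor
        · have := (hx1 i).1; have := (hx2 i).1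
          positivity
        · nlinarith [(hx1 i).2, (hx2 i).2, mul_le_mul_of_nonneg_left (hx1 i).2 ha,
            mul_le_mul_of_nonneg_left (hx2 i).2 hb]
      · simp only [Prod.smul_mk, Prod.mk_add_mk, smul_eq_mul]
        positivity
      · simp only [Prod.smul_mk, Prod.mk_add_mk, smul_eq_mul]
        positivity
      · simp only [Prod.smul_mk, Prod.mk_add_mk, smul_eq_mul, Pi.add_apply, Pi.smul_apply,
          smul_eq_mul]
        have hLlin : ∑ k, (2 * (qr (∑ j ∈ Finset.Iic k, c (τ j)) -
              qr (∑ j ∈ Finset.Iio k, c (τ j)))) * (a * x1 (τ k) + b * x2 (τ k))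
            = a * (∑ k, (2 * (qr (∑ j ∈ Finset.Iic k, c (τ j)) -
                qr (∑ j ∈ Finset.Iio k, c (τ j)))) * x1 (τ k))
              + b * (∑ k, (2 * (qr (∑ j ∈ Finset.Iic k, c (τ j)) -
                qr (∑ j ∈ Finset.Iio k, c (τ j)))) * x2 (τ k)) := by
          rw [Finset.mul_sum, Finset.mul_sum, ← Finset.sum_add_distrib]
          apply Finset.sum_congr rfl
          intros; ring
        simp only [qr] at hLlin
        rw [hLlin]
        have hL1 : 0 ≤ ∑ k, (2 * (qr (∑ j ∈ Finset.Iic k, c (τ j)) -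
            qr (∑ j ∈ Finset.Iio k, c (τ j)))) * x1 (τ k) :=
          Finset.sum_nonneg fun k _ => mul_nonneg (hγ τ k) (hx1 (τ k)).1
        have hL2 : 0 ≤ ∑ k, (2 * (qr (∑ j ∈ Finset.Iic k, c (τ j)) -
            qr (∑ j ∈ Finset.Iio k, c (τ j)))) * x2 (τ k) :=
          Finset.sum_nonneg fun k _ => mul_nonneg (hγ τ k) (hx2 (τ k)).1
        simp only [qr] at hL1 hL2
        exact quad_combo hL1 hL2 hw1 hz1 hw2 hz2 (hq1 τ) (hq2 τ) ha hb
  · -- RHS ⊆ hull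
    set S := {p : (Fin n → ℝ) × ℝ × ℝ |
          (∀ i, p.1 i = 0 ∨ p.1 i = 1) ∧ 0 ≤ p.2.1 ∧ 0 ≤ p.2.2 ∧
          Real.sqrt (∑ i, c i * p.1 i) ≤ p.2.1 * p.2.2} with hSdef
    rintro ⟨x, w, z⟩ ⟨hx, hw, hz, hq⟩
    simp only [Set.mem_setOf_eq] at hx hw hz hq ⊢
    -- sorting permutation (descending)
    set τ : Equiv.Perm (Fin n) := (Fin.revPerm).trans (Tuple.sort x) with hτdef
    have hτmono : ∀ a b : Fin n, a ≤ b → x (τ b) ≤ x (τ a) := by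
      intro a b hab
      have h1 : b.rev ≤ a.rev := Fin.rev_le_rev.mpr hab
      have := Tuple.monotone_sort x h1
      simpa [hτdef, Fin.revPerm] using this
    -- padded data
    set v : ℕ → ℝ := pad n (fun k => x (τ k)) with hvdef
    set d : ℕ → ℝ := pad n (fun j => c (τ j)) with hddef
    set C : ℕ → ℝ := fun k => ∑ j ∈ Finset.range k, d j with hCdef
    set s : ℕ → ℝ := fun k => qr (C k) with hsdef
    set V : ℕ → ℝ := fun k => if k = 0 then 1 else v (k - 1) with hVdef
    set μ : ℕ → ℝ := fun k => V k - V (k + 1) with hμdef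
    set σ : ℝ := ∑ k ∈ Finset.range (n + 1), μ k * s k with hσdef
    have hVsucc : ∀ k, V (k + 1) = v k := by intro k; simp [hVdef]
    have hv01 : ∀ k, 0 ≤ v k ∧ v k ≤ 1 := by
      intro k
      simp only [hvdef, pad]
      split
      · exact hx _
      · exact ⟨le_rfl, zero_le_one⟩
    have hvmono : ∀ k, v (k + 1) ≤ v k := by
      intro k
      simp only [hvdef, pad]
      split
      · next h =>
        rw [dif_pos (Nat.lt_of_succ_lt h)]
        exact hτmono ⟨k, Nat.lt_of_succ_lt h⟩ ⟨k + 1, h⟩ (by simp [Fin.le_def])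
      · next h =>
        split
        · next h2 => exact (hx _).1
        · exact le_rfl
    have hvn : v n = 0 := by simp [hvdef, pad]
    have hd0 : ∀ j, 0 ≤ d j := by
      intro j; simp only [hddef, pad]; split
      · exact (hc _).le
      · exact le_rfl
    have hC0 : ∀ k, 0 ≤ C k := fun k => Finset.sum_nonneg fun j _ => hd0 j
    have hCmono : ∀ k, C k ≤ C (k + 1) := by
      intro k
      simp only [hCdef, Finset.sum_range_succ]
      linarith [hd0 k]
    have hs0 : s 0 = 0 := by simp [hsdef, hCdef, qr_zero]
    have hsnn : ∀ k, 0 ≤ s k := fun k => qr_nonneg _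
    have hμnn : ∀ k, 0 ≤ μ k := by
      intro k
      simp only [hμdef]
      match k with
      | 0 => simpa [hVdef] using (hv01 0).2
      | (m + 1) =>
        rw [hVsucc m, hVsucc (m + 1)]
        linarith [hvmono m]
    have hμsum : ∑ k ∈ Finset.range (n + 1), μ k = 1 := by
      simp only [hμdef]
      rw [Finset.sum_range_sub' V (n + 1)]
      rw [hVsucc n, hvn]
      simp [hVdef]
    have hσnn : 0 ≤ σ :=
      Finset.sum_nonneg fun k _ => mul_nonneg (hμnn k) (hsnn k)
    -- the hypothesis inequality at τ rewritten: 2σ squared ≤ 4wz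
    have habel : (∑ k, (2 * (qr (∑ j ∈ Finset.Iic k, c (τ j)) -
          qr (∑ j ∈ Finset.Iio k, c (τ j)))) * x (τ k)) = 2 * σ := by
      have step1 : (∑ k, (2 * (qr (∑ j ∈ Finset.Iic k, c (τ j)) -
            qr (∑ j ∈ Finset.Iio k, c (τ j)))) * x (τ k))
          = ∑ k ∈ Finset.range n, (s (k + 1) - s k) * (2 * v k) := by
        rw [sum_univ_pad (fun k => (2 * (qr (∑ j ∈ Finset.Iic k, c (τ j)) -
          qr (∑ j ∈ Finset.Iio k, c (τ j)))) * x (τ k))]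
        apply Finset.sum_congr rfl
        intro k hk
        have hkn : k < n := Finset.mem_range.mp hk
        simp only [pad, dif_pos hkn]
        rw [sum_Iic_pad (fun j => c (τ j)) ⟨k, hkn⟩, sum_Iio_pad (fun j => c (τ j)) ⟨k, hkn⟩]
        simp only [hsdef, hCdef, hddef, hvdef, pad, dif_pos hkn]
        ring
      rw [step1]
      -- Abel summation
      have A1 : ∑ k ∈ Finset.range (n + 1), V k * s k
          = ∑ k ∈ Finset.range n, V (k + 1) * s (k + 1) := by
        rw [Finset.sum_range_succ' (fun k => V k * s k) n]
        simp [hs0]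
      have A2 : ∑ k ∈ Finset.range (n + 1), V (k + 1) * s k
          = ∑ k ∈ Finset.range n, V (k + 1) * s k := by
        rw [Finset.sum_range_succ]
        rw [hVsucc n, hvn]
        simp
      have : σ = ∑ k ∈ Finset.range (n + 1), V k * s k
          - ∑ k ∈ Finset.range (n + 1), V (k + 1) * s k := by
        rw [hσdef, ← Finset.sum_sub_distrib]
        apply Finset.sum_congr rfl
        intro k _
        simp only [hμdef]; ring
      rw [this, A1, A2, ← Finset.sum_sub_distrib, Finset.mul_sum]
      apply Finset.sum_congr rfl
      intro k _
      rw [hVsucc k]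
      ring
    have hσwz : σ ^ 2 ≤ w * z := by
      have h1 : (∑ k, (2 * (qr (∑ j ∈ Finset.Iic k, c (τ j)) -
          qr (∑ j ∈ Finset.Iio k, c (τ j)))) * x (τ k)) ^ 2 ≤ 4 * w * z := hq τ
      rw [habel] at h1
      nlinarith
    -- characteristic vectors
    set χ : ℕ → (Fin n → ℝ) := fun k i => if ((τ.symm i : ℕ) < k) then 1 else 0 with hχdef
    have hχsum : ∀ k, ∑ i, c i * χ k i = C k := by
      intro k
      rw [show (∑ i, c i * χ k i) = ∑ m, c (τ m) * χ k (τ m) from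
        (Equiv.sum_comp τ (fun i => c i * χ k i)).symm]
      have e1 : ∀ m : Fin n, c (τ m) * χ k (τ m) = if ((m : ℕ) < k) then c (τ m) else 0 := by
        intro m
        simp only [hχdef, Equiv.symm_apply_apply]
        split <;> simp
      simp only [e1]
      rw [sum_univ_pad (fun m => if ((m : ℕ) < k) then c (τ m) else 0)]
      have e2 : ∀ j ∈ Finset.range n, pad n (fun m => if ((m : ℕ) < k) then c (τ m) else 0) j
          = if j < k then d j else 0 := by
        intro j hj
        have hjn : j < n := Finset.mem_range.mp hj
        simp only [pad, hddef, dif_pos hjn]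
      rw [Finset.sum_congr rfl e2]
      -- now ∑_{j ∈ range n} ite (j<k) (d j) 0 = ∑_{j ∈ range k} d j  -- for any k; d j = 0 for j ≥ n
      have e3 : ∑ j ∈ Finset.range n, (if j < k then d j else 0)
          = ∑ j ∈ Finset.range (min k n), d j := by
        rw [← Finset.sum_filter]
        apply Finset.sum_congr
        · ext j
          simp [Nat.lt_min, and_comm]
        · intros; rfl
      rw [e3, hCdef]
      rcases le_total k n with h | h
      · rw [min_eq_left h]
      · rw [min_eq_right h]
        apply Finset.sum_subset (Finset.range_subset_range.mpr h)
        intro j _ hj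
        have : n ≤ j := by
          by_contra hcon
          exact hj (Finset.mem_range.mpr (lt_of_not_ge hcon))
        simp [hddef, pad, Nat.not_lt.mpr this]
    have hχ01 : ∀ k i, χ k i = 0 ∨ χ k i = 1 := by
      intro k i
      simp only [hχdef]
      split
      · exact Or.inr rfl
      · exact Or.inl rfl
    -- decomposition of x
    have hxdecomp : ∀ i, ∑ k ∈ Finset.range (n + 1), μ k * χ k i = x i := by
      intro i
      set m : ℕ := (τ.symm i : ℕ) with hmdef
      have hmn : m < n := (τ.symm i).isLt
      set G : ℕ → ℝ := fun k => if m < k then V k else V (m + 1) with hGdef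
      have term : ∀ k ∈ Finset.range (n + 1), μ k * χ k i = G k - G (k + 1) := by
        intro k _
        by_cases hk : m < k
        · have h3 : G k = V k := by simp only [hGdef]; rw [if_pos hk]
          have h2 : G (k + 1) = V (k + 1) := by
            simp only [hGdef]; rw [if_pos (Nat.lt_succ_of_lt hk)]
          have hχ1 : χ k i = 1 := by
            simp only [hχdef, ← hmdef]; rw [if_pos hk]
          rw [h3, h2, hχ1, mul_one, hμdef]
        · have h3 : G k = V (m + 1) := by simp only [hGdef]; rw [if_neg hk]
          have h2 : G (k + 1) = V (m + 1) := by
            simp only [hGdef]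
            by_cases h2 : m < k + 1
            · have hkm : k = m := by omega
              rw [if_pos h2, hkm]
            · rw [if_neg h2]
          have hχ0 : χ k i = 0 := by
            simp only [hχdef, ← hmdef]; rw [if_neg hk]
          rw [h3, h2, hχ0, mul_zero]
          ring
      rw [Finset.sum_congr rfl term, Finset.sum_range_sub' G (n + 1)]
      have hG0 : G 0 = V (m + 1) := by simp [hGdef]
      have hGn : G (n + 1) = V (n + 1) := by
        simp only [hGdef]
        rw [if_pos (by omega : m < n + 1)]
      rw [hG0, hGn, hVsucc, hVsucc, hvn]
      have hfin : (⟨m, hmn⟩ : Fin n) = τ.symm i := by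
        apply Fin.ext
        simp [hmdef]
      have : v m = x i := by
        simp only [hvdef, pad, dif_pos hmn, hfin, Equiv.apply_symm_apply]
      rw [this]; ring
    rcases eq_or_lt_of_le hσnn with hσ0 | hσpos
    · -- σ = 0 : x must be 0, the point itself is in S
      have hterm : ∀ k ∈ Finset.range (n + 1), μ k * s k = 0 := by
        have := (Finset.sum_eq_zero_iff_of_nonneg
          (fun k _ => mul_nonneg (hμnn k) (hsnn k))).mp hσ0.symm
        exact this
      have hμ0 : ∀ k, 1 ≤ k → k ≤ n → μ k = 0 := by
        intro k hk1 hkn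
        have hn1 : 0 < n := lt_of_lt_of_le hk1 hkn
        have hspos : 0 < s k := by
          have hd0pos : 0 < d 0 := by
            simp only [hddef, pad, dif_pos hn1]
            exact hc _
          have hCk : 0 < C k := by
            have : d 0 ≤ C k := by
              apply Finset.single_le_sum (fun j _ => hd0 j)
              exact Finset.mem_range.mpr hk1
            linarith
          exact qr_pos hCk
        have := hterm k (Finset.mem_range.mpr (Nat.lt_succ_of_le hkn))
        rcases mul_eq_zero.mp this with h | h
        · exact h
        · exact absurd h (ne_of_gt hspos)
      have hx0 : ∀ i, x i = 0 := by
        intro i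
        rw [← hxdecomp i]
        apply Finset.sum_eq_zero
        intro k hk
        match k with
        | 0 =>
          have : χ 0 i = 0 := by
            simp only [hχdef]
            rw [if_neg (Nat.not_lt_zero _)]
          rw [this, mul_zero]
        | (j + 1) =>
          have hkn : j + 1 ≤ n := Nat.lt_succ_iff.mp (Finset.mem_range.mp hk)
          rw [hμ0 (j + 1) (Nat.succ_le_succ (Nat.zero_le j)) hkn, zero_mul]
      apply subset_convexHull ℝ S
      rw [hSdef]
      refine ⟨fun i => Or.inl (hx0 i), hw, hz, ?_⟩
      have : ∑ i, c i * x i = 0 := by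
        apply Finset.sum_eq_zero
        intro i _
        rw [hx0 i, mul_zero]
      rw [this, Real.sqrt_zero]
      exact mul_nonneg hw hz
    · -- σ > 0 : explicit convex combination
      have hσne : σ ≠ 0 := ne_of_gt hσpos
      set f : ℕ → (Fin n → ℝ) × ℝ × ℝ := fun k => (χ k, w * s k / σ, z * s k / σ) with hfdef
      have hfS : ∀ k ∈ Finset.range (n + 1), f k ∈ S := by
        intro k _
        rw [hSdef]
        refine ⟨fun i => hχ01 k i, ?_, ?_, ?_⟩
        · show (0:ℝ) ≤ w * s k / σ
          exact div_nonneg (mul_nonneg hw (hsnn k)) hσnn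
        · show (0:ℝ) ≤ z * s k / σ
          exact div_nonneg (mul_nonneg hz (hsnn k)) hσnn
        show Real.sqrt (∑ i, c i * χ k i) ≤ (w * s k / σ) * (z * s k / σ)
        rw [hχsum k]
        have hσ2 : 0 < σ ^ 2 := by positivity
        have hdiv : 1 ≤ w * z / σ ^ 2 := (one_le_div hσ2).mpr (by linarith [hσwz])
        have hCs : Real.sqrt (C k) = s k ^ 2 := (sq_qr (C k)).symm
        rw [hCs]
        calc s k ^ 2 = s k ^ 2 * 1 := by ring
          _ ≤ s k ^ 2 * (w * z / σ ^ 2) := by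
              exact mul_le_mul_of_nonneg_left hdiv (sq_nonneg (s k))
          _ = (w * s k / σ) * (z * s k / σ) := by
              field_simp
      have hcomb : ∑ k ∈ Finset.range (n + 1), μ k • f k = (x, w, z) := by
        rw [Prod.ext_iff]
        constructor
        · rw [Prod.fst_sum]
          funext i
          rw [Finset.sum_apply]
          have : ∀ k ∈ Finset.range (n + 1), (μ k • f k).1 i = μ k * χ k i := by
            intro k _
            simp [hfdef]
          rw [Finset.sum_congr rfl this]
          exact hxdecomp i
        · rw [Prod.ext_iff]
          constructor
          · rw [Prod.snd_sum, Prod.fst_sum]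
            have : ∀ k ∈ Finset.range (n + 1), ((μ k • f k).2).1
                = (w / σ) * (μ k * s k) := by
              intro k _
              simp only [hfdef, Prod.smul_snd, Prod.smul_fst, smul_eq_mul]
              ring
            rw [Finset.sum_congr rfl this, ← Finset.mul_sum, ← hσdef]
            field_simp
          · rw [Prod.snd_sum, Prod.snd_sum]
            have : ∀ k ∈ Finset.range (n + 1), ((μ k • f k).2).2
                = (z / σ) * (μ k * s k) := by
              intro k _
              simp only [hfdef, Prod.smul_snd, smul_eq_mul]
              ring
            rw [Finset.sum_congr rfl this, ← Finset.mul_sum, ← hσdef]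
            field_simp
      rw [← hcomb]
      exact Convex.sum_mem (convex_convexHull ℝ S) (fun k _ => hμnn k) hμsum
        (fun k hk => subset_convexHull ℝ S (hfS k hk))
end

section
/- The convex hull of L (taken in ℝ³) equals the set of triples (x, y, z) with 0 ≤ x ≤ 1, 0 ≤ y ≤ 1, z ≥ 0, and g(x, y) ≤ z, where g(x, y) = √((√σ + x(√(c+σ) − √σ))² + d y²) if y ≤ x + (1−x)√(σ/(σ+c)), and g(x, y) = √(σ(1−x)² + d(y−x)²) + x√(σ+c+d) otherwise. -/
set_option maxHeartbeats 1000000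

private lemma cs_core (a b u v : ℝ) (h : 0 ≤ a * u + b * v) :
    a * u + b * v ≤ Real.sqrt ((a^2 + b^2) * (u^2 + v^2)) := by
  calc a*u+b*v = Real.sqrt ((a*u+b*v)^2) := (Real.sqrt_sq h).symm
    _ ≤ _ := Real.sqrt_le_sqrt (by nlinarith [sq_nonneg (a*v-b*u)])

private lemma cs_sqrt (s1 s2 d t u : ℝ) (h1 : 0 ≤ s1) (h2 : 0 ≤ s2) (hd : 0 ≤ d)
    (h : 0 ≤ Real.sqrt s1 * Real.sqrt s2 + d * (t * u)) :
    Real.sqrt s1 * Real.sqrt s2 + d * (t * u)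
      ≤ Real.sqrt (s1 + d * t^2) * Real.sqrt (s2 + d * u^2) := by
  have e1 : Real.sqrt s1 ^ 2 = s1 := Real.sq_sqrt h1
  have e2 : Real.sqrt s2 ^ 2 = s2 := Real.sq_sqrt h2
  have e3 : Real.sqrt d ^ 2 = d := Real.sq_sqrt hd
  have h' : Real.sqrt s1 * Real.sqrt s2 + (Real.sqrt d * t) * (Real.sqrt d * u)
      = Real.sqrt s1 * Real.sqrt s2 + d * (t*u) := by linear_combination t*u*e3
  have key := cs_core (Real.sqrt s1) (Real.sqrt d * t) (Real.sqrt s2) (Real.sqrt d * u)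
    (by rw [h']; exact h)
  rw [h'] at key
  have ee : (Real.sqrt s1^2 + (Real.sqrt d*t)^2) * (Real.sqrt s2^2 + (Real.sqrt d*u)^2)
      = (s1+d*t^2)*(s2+d*u^2) := by
    rw [mul_pow, mul_pow, e1, e2, e3]
  rw [ee, Real.sqrt_mul (by positivity)] at key
  exact key

private lemma sqrt_line (s' d : ℝ) (hs' : 0 ≤ s') (hd : 0 ≤ d)
    (a b y0 y1 : ℝ) (ha : 0 ≤ a) (hb : 0 ≤ b) (hab : a + b = 1)
    (hy0 : 0 ≤ y0) (hy1 : 0 ≤ y1) :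
    Real.sqrt (s' + d * (a*y0+b*y1)^2)
      ≤ a * Real.sqrt (s' + d * y0^2) + b * Real.sqrt (s' + d * y1^2) := by
  obtain ⟨Y, hY⟩ : ∃ x, x = a*y0+b*y1 := ⟨_, rfl⟩
  rw [← hY]
  have hY0 : 0 ≤ Y := by rw [hY]; positivity
  obtain ⟨S, hSdef⟩ : ∃ x, x = Real.sqrt (s' + d*Y^2) := ⟨_, rfl⟩
  rw [← hSdef]
  have hS0 : 0 ≤ S := hSdef ▸ Real.sqrt_nonneg _
  rcases eq_or_lt_of_le hS0 with h0 | hpos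
  · rw [← h0]; positivity
  · have hS2 : S^2 = s' + d*Y^2 := hSdef ▸ Real.sq_sqrt (by positivity)
    have ms : Real.sqrt s' * Real.sqrt s' = s' := Real.mul_self_sqrt hs'
    have c0 := cs_sqrt s' s' d y0 Y hs' hs' hd (by positivity)
    have c1 := cs_sqrt s' s' d y1 Y hs' hs' hd (by positivity)
    rw [ms, ← hSdef] at c0 c1
    have hid : a*(s' + d*(y0*Y)) + b*(s' + d*(y1*Y)) = s' + d*Y^2 := by
      rw [hY]; ring_nf; linear_combination s' * hab
    have key : S * S ≤ (a * Real.sqrt (s' + d*y0^2) + b * Real.sqrt (s' + d*y1^2)) * S := by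
      nlinarith [mul_le_mul_of_nonneg_left c0 ha, mul_le_mul_of_nonneg_left c1 hb, hS2, hid]
    exact le_of_mul_le_mul_right key hpos

private lemma convex_slab (s' d v : ℝ) (hs' : 0 ≤ s') (hd : 0 ≤ d) :
    Convex ℝ {p : ℝ × ℝ × ℝ | p.1 = v ∧ 0 ≤ p.2.1 ∧ p.2.1 ≤ 1 ∧ 0 ≤ p.2.2 ∧
      Real.sqrt (s' + d * p.2.1^2) ≤ p.2.2} := by
  rintro ⟨x1, y1, z1⟩ ⟨hx1, hy1, hy1', hz1, hs1⟩ ⟨x2, y2, z2⟩ ⟨hx2, hy2, hy2', hz2, hs2⟩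
    a b ha hb hab
  simp only [Set.mem_setOf_eq, Prod.smul_mk, Prod.mk_add_mk, smul_eq_mul] at *
  refine ⟨by rw [hx1, hx2]; linear_combination v*hab, by positivity,
    by nlinarith [mul_le_of_le_one_right ha hy1', mul_le_of_le_one_right hb hy2'],
    by positivity, ?_⟩
  calc Real.sqrt (s' + d * (a*y1+b*y2)^2)
      ≤ a * Real.sqrt (s' + d * y1^2) + b * Real.sqrt (s' + d * y2^2) :=
        sqrt_line s' d hs' hd a b y1 y2 ha hb hab hy1 hy2
    _ ≤ a * z1 + b * z2 :=
        add_le_add (mul_le_mul_of_nonneg_left hs1 ha) (mul_le_mul_of_nonneg_left hs2 hb)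

private lemma fwd1 (σ c d : ℝ) (hσ : 0 ≤ σ) (hc : 0 ≤ c) (hd : 0 ≤ d)
    (a b y0 y1 : ℝ) (ha : 0 ≤ a) (hb : 0 ≤ b)
    (hy0 : 0 ≤ y0) (hy1 : 0 ≤ y1) :
    Real.sqrt ((a * Real.sqrt σ + b * Real.sqrt (σ+c))^2 + d*(a*y0+b*y1)^2)
      ≤ a * Real.sqrt (σ + d*y0^2) + b * Real.sqrt (σ + c + d*y1^2) := by
  set A := a * Real.sqrt σ + b * Real.sqrt (σ+c) with hAdef
  have hA0 : 0 ≤ A := by positivity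
  set Y := a*y0+b*y1 with hY
  have hY0 : 0 ≤ Y := by positivity
  set S := Real.sqrt (A^2 + d*Y^2) with hSdef
  have hS0 : 0 ≤ S := Real.sqrt_nonneg _
  rcases eq_or_lt_of_le hS0 with h0 | hpos
  · rw [← h0]; positivity
  · have hS2 : S^2 = A^2 + d*Y^2 := Real.sq_sqrt (by positivity)
    have c0 := cs_sqrt σ (A^2) d y0 Y hσ (sq_nonneg A) hd (by positivity)
    have c1 := cs_sqrt (σ+c) (A^2) d y1 Y (by positivity) (sq_nonneg A) hd (by positivity)
    rw [Real.sqrt_sq hA0, ← hSdef] at c0 c1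
    have hid : a*(Real.sqrt σ * A + d*(y0*Y)) + b*(Real.sqrt (σ+c) * A + d*(y1*Y))
        = A^2 + d*Y^2 := by
      linear_combination A * hAdef.symm + d * Y * hY.symm
    have key : S * S ≤ (a * Real.sqrt (σ + d*y0^2) + b * Real.sqrt (σ + c + d*y1^2)) * S := by
      nlinarith [mul_le_mul_of_nonneg_left c0 ha, mul_le_mul_of_nonneg_left c1 hb, hS2, hid]
    exact le_of_mul_le_mul_right key hpos

private lemma fwd2 (σ c d : ℝ) (hσ : 0 ≤ σ) (hc : 0 < c) (hd : 0 < d)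
    (a b y0 y1 : ℝ) (ha : 0 ≤ a) (hb : 0 ≤ b) (hab : a + b = 1)
    (hy0 : 0 ≤ y0) (hy0' : y0 ≤ 1) (hy1 : 0 ≤ y1) (hy1' : y1 ≤ 1)
    (hcond : b + a * Real.sqrt (σ/(σ+c)) < a*y0 + b*y1) :
    Real.sqrt (σ*a^2 + d*(a*y0 + b*y1 - b)^2) + b * Real.sqrt (σ+c+d)
      ≤ a * Real.sqrt (σ + d*y0^2) + b * Real.sqrt (σ + c + d*y1^2) := by
  have hσc : 0 < σ + c := by linarith
  obtain ⟨s, hsdef⟩ : ∃ x, x = Real.sqrt (σ/(σ+c)) := ⟨_, rfl⟩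
  rw [← hsdef] at hcond
  have hs0 : 0 ≤ s := hsdef ▸ Real.sqrt_nonneg _
  have hs2 : s^2 = σ/(σ+c) := hsdef ▸ Real.sq_sqrt (by positivity)
  obtain ⟨t, htdef⟩ : ∃ x, x = a*y0 + b*y1 - b := ⟨_, rfl⟩
  rw [← htdef]
  have ht : a*s < t := by rw [htdef]; linarith [hcond]
  have ht0 : 0 < t := lt_of_le_of_lt (by positivity) ht
  have ha' : 0 < a := by
    rcases ha.lt_or_eq with h | h
    · exact h
    · exfalso
      have hb1 : b*y1 ≤ b := mul_le_of_le_one_right hb hy1'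
      rw [htdef, ← h] at ht0
      linarith
  obtain ⟨B, hBdef⟩ : ∃ x, x = Real.sqrt (σ*a^2 + d*t^2) := ⟨_, rfl⟩
  rw [← hBdef]
  have hB2 : B^2 = σ*a^2 + d*t^2 := hBdef ▸ Real.sq_sqrt (by positivity)
  have hBpos : 0 < B := by
    rw [hBdef]
    have := mul_pos hd (mul_pos ht0 ht0)
    have := mul_nonneg hσ (mul_nonneg ha ha)
    exact Real.sqrt_pos.mpr (by nlinarith)
  obtain ⟨K, hKdef⟩ : ∃ x, x = Real.sqrt (σ+c+d) := ⟨_, rfl⟩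
  rw [← hKdef]
  have hK2 : K^2 = σ+c+d := hKdef ▸ Real.sq_sqrt (by positivity)
  have hKpos : 0 < K := hKdef ▸ Real.sqrt_pos.mpr (by linarith)
  -- CS inequality 1
  have sA : Real.sqrt (σ*a^2) = Real.sqrt σ * a := by
    rw [Real.sqrt_mul hσ, Real.sqrt_sq ha]
  have c0 : σ*a + d*(y0*t) ≤ Real.sqrt (σ + d*y0^2) * B := by
    have h := cs_sqrt σ (σ*a^2) d y0 t hσ (by positivity) hd.le
      (add_nonneg (mul_nonneg (Real.sqrt_nonneg _) (Real.sqrt_nonneg _))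
        (mul_nonneg hd.le (mul_nonneg hy0 ht0.le)))
    rw [sA, ← mul_assoc, Real.mul_self_sqrt hσ, ← hBdef] at h
    exact h
  -- CS inequality 2
  have c1 : (σ+c) + d*(y1*1) ≤ Real.sqrt (σ+c+d*y1^2) * K := by
    have h := cs_sqrt (σ+c) (σ+c) d y1 1 (by positivity) (by positivity) hd.le
      (add_nonneg (mul_nonneg (Real.sqrt_nonneg _) (Real.sqrt_nonneg _))
        (mul_nonneg hd.le (mul_nonneg hy1 zero_le_one)))
    rw [Real.mul_self_sqrt (by positivity : (0:ℝ) ≤ σ + c)] at h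
    have e : σ+c+d*(1:ℝ)^2 = σ+c+d := by ring
    rw [e, ← hKdef] at h
    exact h
  -- B ≤ K * t
  have hKB : B ≤ K * t := by
    have h2 : (a*s)^2 ≤ t^2 := pow_le_pow_left₀ (mul_nonneg ha hs0) ht.le 2
    have h3 : s^2*(σ+c) = σ := by rw [hs2]; field_simp
    have h1 : σ * a^2 ≤ (σ+c) * t^2 := by nlinarith
    have hsq : B^2 ≤ (K*t)^2 := by rw [mul_pow, hK2, hB2]; nlinarith
    have hKt : 0 ≤ K*t := mul_nonneg hKpos.le ht0.le
    calc B = Real.sqrt (B^2) := (Real.sqrt_sq hBpos.le).symm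
      _ ≤ Real.sqrt ((K*t)^2) := Real.sqrt_le_sqrt hsq
      _ = K*t := Real.sqrt_sq hKt
  -- combine
  have hid : a*(σ*a + d*(y0*t)) = σ*a^2 + d*t^2 + d*t*(b*(1-y1)) := by
    rw [htdef]; ring
  have H1 := mul_le_mul_of_nonneg_left (mul_le_mul_of_nonneg_left c0 ha) hKpos.le
  rw [hid] at H1
  have H2 := mul_le_mul_of_nonneg_left c1 (mul_nonneg hb hBpos.le)
  have H3 := mul_le_mul_of_nonneg_left hKB
    (mul_nonneg (mul_nonneg hd.le hb) (by linarith : (0:ℝ) ≤ 1 - y1))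
  have E1 : B^2*K = (σ*a^2 + d*t^2)*K := by rw [hB2]
  have E2 : K^2*(b*B) = (σ+c+d)*(b*B) := by rw [hK2]
  have final : (B + b*K) * (B*K)
      ≤ (a * Real.sqrt (σ + d*y0^2) + b * Real.sqrt (σ+c+d*y1^2)) * (B*K) := by
    linarith [H1, H2, H3, E1, E2,
      mul_nonneg (mul_nonneg hd.le hb) (mul_nonneg (by linarith : (0:ℝ) ≤ 1 - y1) (mul_nonneg hKpos.le ht0.le))]
  exact le_of_mul_le_mul_right final (mul_pos hBpos hKpos)

/-- The convex hull of L equals the set of triples (x, y, z) with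
0 ≤ x ≤ 1, 0 ≤ y ≤ 1, z ≥ 0, and g(x, y) ≤ z, where g is the piecewise function. -/
theorem convexHull_L
    (σ c d : ℝ) (hσ : 0 ≤ σ) (hc : 0 < c) (hd : 0 < d) :
    convexHull ℝ {p : ℝ × ℝ × ℝ |
        (p.1 = 0 ∨ p.1 = 1) ∧ 0 ≤ p.2.1 ∧ p.2.1 ≤ 1 ∧ 0 ≤ p.2.2 ∧
        Real.sqrt (σ + c * p.1 + d * p.2.1 ^ 2) ≤ p.2.2} =
      {p : ℝ × ℝ × ℝ |
        0 ≤ p.1 ∧ p.1 ≤ 1 ∧ 0 ≤ p.2.1 ∧ p.2.1 ≤ 1 ∧ 0 ≤ p.2.2 ∧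
        (if p.2.1 ≤ p.1 + (1 - p.1) * Real.sqrt (σ / (σ + c)) then
            Real.sqrt ((Real.sqrt σ + p.1 * (Real.sqrt (c + σ) - Real.sqrt σ)) ^ 2
              + d * p.2.1 ^ 2)
          else
            Real.sqrt (σ * (1 - p.1) ^ 2 + d * (p.2.1 - p.1) ^ 2)
              + p.1 * Real.sqrt (σ + c + d)) ≤ p.2.2} := by
  have hσc : 0 < σ + c := by linarith
  set A0 : Set (ℝ × ℝ × ℝ) := {p | p.1 = 0 ∧ 0 ≤ p.2.1 ∧ p.2.1 ≤ 1 ∧ 0 ≤ p.2.2 ∧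
    Real.sqrt (σ + d * p.2.1^2) ≤ p.2.2} with hA0def
  set A1 : Set (ℝ × ℝ × ℝ) := {p | p.1 = 1 ∧ 0 ≤ p.2.1 ∧ p.2.1 ≤ 1 ∧ 0 ≤ p.2.2 ∧
    Real.sqrt (σ + c + d * p.2.1^2) ≤ p.2.2} with hA1def
  have hL : {p : ℝ × ℝ × ℝ |
      (p.1 = 0 ∨ p.1 = 1) ∧ 0 ≤ p.2.1 ∧ p.2.1 ≤ 1 ∧ 0 ≤ p.2.2 ∧
      Real.sqrt (σ + c * p.1 + d * p.2.1 ^ 2) ≤ p.2.2} = A0 ∪ A1 := by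
    ext ⟨x, y, z⟩
    simp only [hA0def, hA1def, Set.mem_setOf_eq, Set.mem_union]
    constructor
    · rintro ⟨h01, hy, hy', hz, hs⟩
      rcases h01 with rfl | rfl
      · exact Or.inl ⟨rfl, hy, hy', hz, by rw [show σ + d*y^2 = σ + c*0 + d*y^2 by ring]; exact hs⟩
      · exact Or.inr ⟨rfl, hy, hy', hz, by rw [show σ + c + d*y^2 = σ + c*1 + d*y^2 by ring]; exact hs⟩
    · rintro (⟨rfl, hy, hy', hz, hs⟩ | ⟨rfl, hy, hy', hz, hs⟩)
      · exact ⟨Or.inl rfl, hy, hy', hz, by rw [show σ + c*0 + d*y^2 = σ + d*y^2 by ring]; exact hs⟩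
      · exact ⟨Or.inr rfl, hy, hy', hz, by rw [show σ + c*1 + d*y^2 = σ + c + d*y^2 by ring]; exact hs⟩
  have hcv0 : Convex ℝ A0 := convex_slab σ d 0 hσ hd.le
  have hcv1 : Convex ℝ A1 := convex_slab (σ+c) d 1 (by linarith) hd.le
  have hne0 : A0.Nonempty := ⟨(0, 0, Real.sqrt σ),
    ⟨rfl, le_refl 0, zero_le_one, Real.sqrt_nonneg _,
      by rw [show σ + d*(0:ℝ)^2 = σ by ring]⟩⟩
  have hne1 : A1.Nonempty := ⟨(1, 0, Real.sqrt (σ+c)),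
    ⟨rfl, le_refl 0, zero_le_one, Real.sqrt_nonneg _,
      by rw [show σ + c + d*(0:ℝ)^2 = σ + c by ring]⟩⟩
  rw [hL, hcv0.convexHull_union hcv1 hne0 hne1]
  ext ⟨x, y, z⟩
  simp only [Set.mem_setOf_eq]
  rw [mem_convexJoin]
  constructor
  · -- forward: convex join ⊆ described set
    rintro ⟨⟨x0, y0, z0⟩, ⟨hx0, hy0, hy0', hz0, hs0⟩, ⟨x1, y1, z1⟩, ⟨hx1, hy1, hy1', hz1, hs1⟩,
      a, b, ha, hb, hab, heq⟩
    simp only [hA0def, hA1def, Set.mem_setOf_eq] at hx0 hx1 hy0 hy1 hs0 hs1 hz0 hz1 hy0' hy1'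
    subst hx0; subst hx1
    simp only [Prod.smul_mk, Prod.mk_add_mk, smul_eq_mul, Prod.mk.injEq,
      mul_zero, mul_one, zero_add] at heq
    obtain ⟨hx, hy, hz⟩ := heq
    subst hx; subst hy; subst hz
    refine ⟨hb, by linarith, by positivity,
      by nlinarith [mul_le_of_le_one_right ha hy0', mul_le_of_le_one_right hb hy1'],
      by positivity, ?_⟩
    have haa : (1:ℝ) - b = a := by linarith
    split_ifs with hif
    · -- branch 1
      rw [show c + σ = σ + c from add_comm c σ,
        show Real.sqrt σ + b * (Real.sqrt (σ+c) - Real.sqrt σ)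
          = a * Real.sqrt σ + b * Real.sqrt (σ+c) by linear_combination (-Real.sqrt σ) * hab]
      calc Real.sqrt ((a * Real.sqrt σ + b * Real.sqrt (σ+c))^2 + d*(a*y0+b*y1)^2)
          ≤ a * Real.sqrt (σ + d*y0^2) + b * Real.sqrt (σ + c + d*y1^2) :=
            fwd1 σ c d hσ hc.le hd.le a b y0 y1 ha hb hy0 hy1
        _ ≤ a * z0 + b * z1 :=
            add_le_add (mul_le_mul_of_nonneg_left hs0 ha) (mul_le_mul_of_nonneg_left hs1 hb)
    · -- branch 2
      rw [haa] at hif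
      push_neg at hif
      rw [haa]
      calc Real.sqrt (σ*a^2 + d*(a*y0+b*y1 - b)^2) + b * Real.sqrt (σ+c+d)
          ≤ a * Real.sqrt (σ + d*y0^2) + b * Real.sqrt (σ + c + d*y1^2) :=
            fwd2 σ c d hσ hc hd a b y0 y1 ha hb hab hy0 hy0' hy1 hy1' hif
        _ ≤ a * z0 + b * z1 :=
            add_le_add (mul_le_mul_of_nonneg_left hs0 ha) (mul_le_mul_of_nonneg_left hs1 hb)
  · -- backward
    rintro ⟨hx0, hx1, hy0, hy1, hz0, hg⟩
    by_cases hif : y ≤ x + (1 - x) * Real.sqrt (σ / (σ + c))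
    · rw [if_pos hif] at hg
      have hA' : Real.sqrt σ + x * (Real.sqrt (c + σ) - Real.sqrt σ)
          = (1-x) * Real.sqrt σ + x * Real.sqrt (σ+c) := by
        rw [add_comm c σ]; ring
      rw [hA'] at hg
      obtain ⟨A, hAdef⟩ : ∃ w, w = (1-x) * Real.sqrt σ + x * Real.sqrt (σ+c) := ⟨_, rfl⟩
      rw [← hAdef] at hg
      have hA0' : 0 ≤ A := by
        rw [hAdef]
        exact add_nonneg (mul_nonneg (by linarith) (Real.sqrt_nonneg _))
          (mul_nonneg hx0 (Real.sqrt_nonneg _))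
      rcases hA0'.lt_or_eq with hApos | hAzero
      · -- A > 0, generic case
        obtain ⟨S, hSdef⟩ : ∃ w, w = Real.sqrt (A^2 + d*y^2) := ⟨_, rfl⟩
        rw [← hSdef] at hg
        have hS0 : 0 ≤ S := hSdef ▸ Real.sqrt_nonneg _
        have hsσ : Real.sqrt σ ^ 2 = σ := Real.sq_sqrt hσ
        have hsσc : Real.sqrt (σ+c) ^ 2 = σ+c := Real.sq_sqrt (by positivity)
        have hAne : A ≠ 0 := ne_of_gt hApos
        obtain ⟨y₀, hy₀⟩ : ∃ w, w = y * Real.sqrt σ / A := ⟨_, rfl⟩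
        obtain ⟨y₁, hy₁⟩ : ∃ w, w = y * Real.sqrt (σ+c) / A := ⟨_, rfl⟩
        have hy₀0 : 0 ≤ y₀ := by
          rw [hy₀]; exact div_nonneg (mul_nonneg hy0 (Real.sqrt_nonneg _)) hApos.le
        have hy₁0 : 0 ≤ y₁ := by
          rw [hy₁]; exact div_nonneg (mul_nonneg hy0 (Real.sqrt_nonneg _)) hApos.le
        have hy₀1 : y₀ ≤ 1 := by
          rw [hy₀, div_le_one hApos, hAdef]
          have h1 : y * Real.sqrt σ ≤ Real.sqrt σ :=
            mul_le_of_le_one_left (Real.sqrt_nonneg _) hy1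
          have h2 : Real.sqrt σ ≤ Real.sqrt (σ+c) := Real.sqrt_le_sqrt (by linarith)
          nlinarith [mul_nonneg hx0 (sub_nonneg.mpr h2)]
        have hsA : Real.sqrt (σ/(σ+c)) * Real.sqrt (σ+c) = Real.sqrt σ := by
          rw [← Real.sqrt_mul (by positivity : (0:ℝ) ≤ σ/(σ+c)),
            div_mul_cancel₀ _ (ne_of_gt hσc)]
        have hy₁1 : y₁ ≤ 1 := by
          rw [hy₁, div_le_one hApos, hAdef]
          have h1 := mul_le_mul_of_nonneg_right hif (Real.sqrt_nonneg (σ+c))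
          have h2 : (x + (1-x)*Real.sqrt (σ/(σ+c))) * Real.sqrt (σ+c)
              = x * Real.sqrt (σ+c) + (1-x) * Real.sqrt σ := by
            linear_combination (1-x) * hsA
          rw [h2] at h1
          linarith
        have hAy₀ : A * y₀ = y * Real.sqrt σ := by rw [hy₀]; field_simp
        have hAy₁ : A * y₁ = y * Real.sqrt (σ+c) := by rw [hy₁]; field_simp
        have hv0 : A * Real.sqrt (σ + d*y₀^2) = Real.sqrt σ * S := by
          rw [show A = Real.sqrt (A^2) from (Real.sqrt_sq hApos.le).symm]
          rw [← Real.sqrt_mul (sq_nonneg A), hSdef, ← Real.sqrt_mul hσ]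
          congr 1
          have e : A^2*y₀^2 = y^2*σ := by
            linear_combination (A*y₀ + y*Real.sqrt σ)*hAy₀ + y^2*hsσ
          linear_combination d*e
        have hv1 : A * Real.sqrt (σ + c + d*y₁^2) = Real.sqrt (σ+c) * S := by
          rw [show A = Real.sqrt (A^2) from (Real.sqrt_sq hApos.le).symm]
          rw [← Real.sqrt_mul (sq_nonneg A), hSdef,
            ← Real.sqrt_mul (by positivity : (0:ℝ) ≤ σ+c)]
          congr 1
          have e : A^2*y₁^2 = y^2*(σ+c) := by
            linear_combination (A*y₁ + y*Real.sqrt (σ+c))*hAy₁ + y^2*hsσc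
          linear_combination d*e
        have hsum : (1-x)*Real.sqrt (σ + d*y₀^2) + x*Real.sqrt (σ + c + d*y₁^2) = S := by
          apply mul_left_cancel₀ hAne
          linear_combination (1-x)*hv0 + x*hv1 - S*hAdef
        refine ⟨(0, y₀, Real.sqrt (σ + d*y₀^2) + (z - S)), ?_,
          (1, y₁, Real.sqrt (σ + c + d*y₁^2) + (z - S)), ?_,
          1-x, x, by linarith, hx0, by ring, ?_⟩
        · simp only [hA0def, Set.mem_setOf_eq]
          exact ⟨trivial, hy₀0, hy₀1,
            add_nonneg (Real.sqrt_nonneg _) (by linarith),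
            le_add_of_nonneg_right (by linarith)⟩
        · simp only [hA1def, Set.mem_setOf_eq]
          exact ⟨trivial, hy₁0, hy₁1,
            add_nonneg (Real.sqrt_nonneg _) (by linarith),
            le_add_of_nonneg_right (by linarith)⟩
        · have hyy : (1-x)*y₀ + x*y₁ = y := by
            apply mul_left_cancel₀ hAne
            linear_combination (1-x)*hAy₀ + x*hAy₁ - y*hAdef
          simp only [Prod.smul_mk, Prod.mk_add_mk, smul_eq_mul, Prod.mk.injEq]
          exact ⟨by ring, hyy, by linear_combination hsum⟩
      · -- degenerate case A = 0 : x = 0, σ = 0, y = 0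
        have hsc : 0 < Real.sqrt (σ+c) := Real.sqrt_pos.mpr hσc
        have hn1 : 0 ≤ (1-x) * Real.sqrt σ := mul_nonneg (by linarith) (Real.sqrt_nonneg _)
        have hn2 : 0 ≤ x * Real.sqrt (σ+c) := mul_nonneg hx0 (Real.sqrt_nonneg _)
        have hsum0 : (1-x) * Real.sqrt σ + x * Real.sqrt (σ+c) = 0 := by
          rw [← hAdef, ← hAzero]
        have hx2 : x * Real.sqrt (σ+c) = 0 := by linarith
        have hxz : x = 0 := (mul_eq_zero.mp hx2).resolve_right (ne_of_gt hsc)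
        have hσz : Real.sqrt σ = 0 := by
          rw [hxz] at hsum0; linarith [Real.sqrt_nonneg σ]
        have hσ0 : σ = 0 := by
          have h := Real.sq_sqrt hσ
          rw [hσz] at h; simpa using h.symm
        have hyz : y = 0 := by
          rw [hxz, hσ0] at hif
          simp [Real.sqrt_zero] at hif
          linarith
        subst hxz; subst hyz
        refine ⟨(0, 0, z), ?_, (1, 0, Real.sqrt (σ+c)), ?_,
          1, 0, zero_le_one, le_refl 0, by norm_num, ?_⟩
        · simp only [hA0def, Set.mem_setOf_eq]
          exact ⟨trivial, le_refl 0, zero_le_one, hz0,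
            by rw [show σ + d*(0:ℝ)^2 = σ by ring, hσ0, Real.sqrt_zero]; exact hz0⟩
        · simp only [hA1def, Set.mem_setOf_eq]
          exact ⟨trivial, le_refl 0, zero_le_one, Real.sqrt_nonneg _,
            by rw [show σ + c + d*(0:ℝ)^2 = σ + c by ring]⟩
        · simp only [Prod.smul_mk, Prod.mk_add_mk, smul_eq_mul, Prod.mk.injEq]
          norm_num
    · rw [if_neg hif] at hg
      push_neg at hif
      have hx1' : x < 1 := by
        rcases hx1.lt_or_eq with h | h
        · exact h
        · exfalso; rw [h] at hif; norm_num at hif; linarith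
      have h1x : (0:ℝ) < 1 - x := by linarith
      have hne : (1:ℝ) - x ≠ 0 := ne_of_gt h1x
      have hsq0 : 0 ≤ Real.sqrt (σ/(σ+c)) := Real.sqrt_nonneg _
      have htx : x < y := by nlinarith [mul_nonneg h1x.le hsq0]
      obtain ⟨y₀, hy₀⟩ : ∃ w, w = (y - x)/(1-x) := ⟨_, rfl⟩
      have hy₀0 : 0 ≤ y₀ := by rw [hy₀]; exact div_nonneg (by linarith) h1x.le
      have hy₀1 : y₀ ≤ 1 := by rw [hy₀, div_le_one h1x]; linarith
      obtain ⟨B, hBdef⟩ : ∃ w, w = Real.sqrt (σ*(1-x)^2 + d*(y-x)^2) := ⟨_, rfl⟩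
      rw [← hBdef] at hg
      have hB0 : 0 ≤ B := hBdef ▸ Real.sqrt_nonneg _
      have e : (1-x)*y₀ = y - x := by rw [hy₀]; field_simp
      have hv0 : (1-x) * Real.sqrt (σ + d*y₀^2) = B := by
        rw [show (1:ℝ)-x = Real.sqrt ((1-x)^2) from (Real.sqrt_sq h1x.le).symm]
        rw [← Real.sqrt_mul (sq_nonneg _), hBdef]
        congr 1
        linear_combination d*((1-x)*y₀ + (y-x))*e
      refine ⟨(0, y₀, Real.sqrt (σ + d*y₀^2) + (z - (B + x*Real.sqrt (σ+c+d)))), ?_,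
        (1, 1, Real.sqrt (σ+c+d) + (z - (B + x*Real.sqrt (σ+c+d)))), ?_,
        1-x, x, by linarith, hx0, by ring, ?_⟩
      · simp only [hA0def, Set.mem_setOf_eq]
        exact ⟨trivial, hy₀0, hy₀1,
          add_nonneg (Real.sqrt_nonneg _) (by linarith),
          le_add_of_nonneg_right (by linarith)⟩
      · simp only [hA1def, Set.mem_setOf_eq]
        refine ⟨trivial, zero_le_one, le_refl 1,
          add_nonneg (Real.sqrt_nonneg _) (by linarith), ?_⟩
        rw [show σ + c + d*(1:ℝ)^2 = σ + c + d by ring]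
        exact le_add_of_nonneg_right (by linarith)
      · simp only [Prod.smul_mk, Prod.mk_add_mk, smul_eq_mul, Prod.mk.injEq]
        refine ⟨by ring, by linarith, by linear_combination hv0⟩
end

section
/- For every (x, y) ∈ X and every k ∈ {0, 1, …, n}, the partial strengthened polymatroid inequality holds: √(σ + ∑_{i∈T} d_i y_i²) + ∑_{i=1}^{k} ρ_i x_i ≤ √(σ + ∑_{i=1}^{k} c_i x_i + ∑_{i∈T} d_i y_i²). -/
/-! The partial sums `Sₖ = σ + ∑_{i<k} cᵢ xᵢ + ∑_{i∈T} dᵢ yᵢ²` increase along `k`, and the claim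
telescopes once each term satisfies `ρⱼ xⱼ ≤ √S_{j+1} - √S_j`. For `xⱼ = 1` this is the concavity of
the square root: `b ↦ √(c + b) - √b` is antitone, and the hypothesis on `ρⱼ` evaluates it at some
`B ≥ S_j`. -/

open Finset Real

lemma Real.sqrt_add_sub_sqrt_antitoneOn {c : ℝ} (hc : 0 ≤ c) :
    AntitoneOn (fun b => √(c + b) - √b) (Set.Ici 0) := by
  intro a ha b _ hab
  simp only [Set.mem_Ici] at ha
  -- squaring `√(c + b) + √a ≤ √(c + a) + √b` reduces it to `(c + b) a ≤ (c + a) b`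
  have hprod : √((c + b) * a) ≤ √((c + a) * b) := sqrt_le_sqrt (by nlinarith)
  rw [sqrt_mul (by linarith), sqrt_mul (by linarith)] at hprod
  nlinarith [sq_sqrt (show 0 ≤ c + b by linarith), sq_sqrt (show 0 ≤ c + a by linarith),
    sq_sqrt (show 0 ≤ b by linarith), sq_sqrt ha, sqrt_nonneg (c + b), sqrt_nonneg (c + a),
    sqrt_nonneg a, sqrt_nonneg b]

lemma mul_le_sqrt_add_mul_sub_sqrt {ρ c x S : ℝ} (hc : 0 ≤ c) (hS : 0 ≤ S)
    (hx : x = 0 ∨ x = 1) (hρ : ρ = 0 ∨ ∃ B, ρ = √(c + B) - √B ∧ (x = 1 → S ≤ B)) :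
    ρ * x ≤ √(S + c * x) - √S := by
  rcases hx with rfl | rfl
  · simp
  rw [mul_one, mul_one]
  rcases hρ with rfl | ⟨B, rfl, hSB⟩
  · exact sub_nonneg.2 (sqrt_le_sqrt (by linarith))
  · rw [add_comm S]
    exact sqrt_add_sub_sqrt_antitoneOn hc hS (hS.trans (hSB rfl)) (hSB rfl)

lemma Fin.filter_val_lt_succ {n k : ℕ} (hk : k < n) :
    univ.filter (fun i : Fin n => (i : ℕ) < k + 1) =
      insert ⟨k, hk⟩ (univ.filter (fun i : Fin n => (i : ℕ) < k)) := by
  ext i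
  simp only [mem_filter, mem_univ, true_and, mem_insert, Fin.ext_iff]
  omega

lemma Fin.Iio_eq_filter_val_lt {n : ℕ} (j : Fin n) :
    Iio j = univ.filter (fun i : Fin n => (i : ℕ) < j) := by
  ext i
  simp only [mem_Iio, mem_filter, mem_univ, true_and, Fin.lt_def]

lemma Fin.add_sum_filter_val_lt_le {n : ℕ} (F : ℝ → ℝ) (s : ℝ) (a b : Fin n → ℝ)
    (hstep : ∀ j, a j ≤ F (s + ∑ i ∈ Iio j, b i + b j) - F (s + ∑ i ∈ Iio j, b i))
    {k : ℕ} (hk : k ≤ n) :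
    F s + ∑ i ∈ univ.filter (fun i : Fin n => (i : ℕ) < k), a i ≤
      F (s + ∑ i ∈ univ.filter (fun i : Fin n => (i : ℕ) < k), b i) := by
  induction k with
  | zero => simp
  | succ k ih =>
    have hj := hstep ⟨k, hk⟩
    have hnot : (⟨k, hk⟩ : Fin n) ∉ univ.filter (fun i : Fin n => (i : ℕ) < k) := by simp
    rw [Fin.Iio_eq_filter_val_lt, Fin.val_mk] at hj
    rw [Fin.filter_val_lt_succ hk, sum_insert hnot, sum_insert hnot, add_left_comm _ (b _),
      add_comm (b _)]
    linarith [ih (by omega)]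

/-- For every (x, y) ∈ X and every k ∈ {0, 1, …, n}, the partial
strengthened polymatroid inequality holds:
√(σ + ∑_{i∈T} dᵢ yᵢ²) + ∑_{i=1}^{k} ρᵢ xᵢ ≤ √(σ + ∑_{i=1}^{k} cᵢ xᵢ + ∑_{i∈T} dᵢ yᵢ²). -/
theorem partial_strengthened_polymatroid
    (n m : ℕ) (σ : ℝ) (hσ : 0 ≤ σ) (c : Fin n → ℝ) (hc : ∀ i, 0 ≤ c i)
    (d : Fin m → ℝ) (hd : ∀ i, 0 ≤ d i) (T : Finset (Fin m))
    (X : Set ((Fin n → ℝ) × (Fin m → ℝ)))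
    (hX : ∀ p ∈ X, (∀ i, p.1 i = 0 ∨ p.1 i = 1) ∧ (∀ i, 0 ≤ p.2 i))
    (ρ : Fin n → ℝ)
    (hρ : ∀ k : Fin n, ρ k = 0 ∨ ∃ B : ℝ, 0 ≤ B ∧
      ρ k = Real.sqrt (c k + B) - Real.sqrt B ∧
      ∀ p ∈ X, p.1 k = 1 →
        σ + ∑ i ∈ Finset.Iio k, c i * p.1 i + ∑ i ∈ T, d i * p.2 i ^ 2 ≤ B)
    (x : Fin n → ℝ) (y : Fin m → ℝ) (hxy : (x, y) ∈ X)
    (k : ℕ) (hk : k ≤ n) :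
    Real.sqrt (σ + ∑ i ∈ T, d i * y i ^ 2) +
        ∑ i ∈ Finset.univ.filter (fun i : Fin n => (i : ℕ) < k), ρ i * x i ≤
      Real.sqrt (σ + ∑ i ∈ Finset.univ.filter (fun i : Fin n => (i : ℕ) < k), c i * x i
        + ∑ i ∈ T, d i * y i ^ 2) := by
  have hx : ∀ i, x i = 0 ∨ x i = 1 := (hX _ hxy).1
  have hD : 0 ≤ ∑ i ∈ T, d i * y i ^ 2 := sum_nonneg fun i _ => mul_nonneg (hd i) (sq_nonneg _)
  have hcx : ∀ i, 0 ≤ c i * x i := fun i => by rcases hx i with h | h <;> simp [h, hc i]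
  rw [add_right_comm]
  refine Fin.add_sum_filter_val_lt_le _ _ _ _ (fun j => ?_) hk
  refine mul_le_sqrt_add_mul_sub_sqrt (hc j)
    (add_nonneg (add_nonneg hσ hD) (sum_nonneg fun i _ => hcx i)) (hx j) ?_
  refine (hρ j).imp_right fun ⟨B, _, hρB, hB⟩ => ⟨B, hρB, fun hxj => ?_⟩
  linarith [hB (x, y) hxy hxj]
end

section
/- For every (x, y) ∈ X and every real z ≥ 0 with σ + ∑_{i=1}^n c_i x_i + ∑_{i=1}^m d_i y_i² ≤ z², the strengthened polymatroid inequality holds: (√(σ + ∑_{i∈T} d_i y_i²) + ∑_{i=1}^n ρ_i x_i)² + ∑_{i∈{1,…,m}∖T} d_i y_i² ≤ z². -/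
lemma sqrt_diff_anti_s13 (u B cc : ℝ) (hu : 0 ≤ u) (huB : u ≤ B) (hcc : 0 ≤ cc) :
    Real.sqrt u + Real.sqrt (cc + B) ≤ Real.sqrt (cc + u) + Real.sqrt B := by
  have hB : 0 ≤ B := le_trans hu huB
  have ha := Real.sq_sqrt hu
  have hb := Real.sq_sqrt hB
  have hp := Real.sq_sqrt (by linarith : (0:ℝ) ≤ cc + u)
  have hq := Real.sq_sqrt (by linarith : (0:ℝ) ≤ cc + B)
  have ha' := Real.sqrt_nonneg u
  have hb' := Real.sqrt_nonneg B
  have hp' := Real.sqrt_nonneg (cc + u)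
  have hq' := Real.sqrt_nonneg (cc + B)
  have h1 : Real.sqrt u * Real.sqrt (cc + B) ≤ Real.sqrt (cc + u) * Real.sqrt B := by
    rw [← Real.sqrt_mul hu, ← Real.sqrt_mul (by linarith : (0:ℝ) ≤ cc + u)]
    apply Real.sqrt_le_sqrt; nlinarith
  nlinarith [h1]

/-- For every (x, y) ∈ X and every z ≥ 0 with
σ + ∑ cᵢ xᵢ + ∑ dᵢ yᵢ² ≤ z², the strengthened polymatroid inequality holds:
(√(σ + ∑_{i∈T} dᵢ yᵢ²) + ∑ ρᵢ xᵢ)² + ∑_{i∉T} dᵢ yᵢ² ≤ z². -/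
theorem strengthened_polymatroid
    (n m : ℕ) (σ : ℝ) (hσ : 0 ≤ σ) (c : Fin n → ℝ) (hc : ∀ i, 0 ≤ c i)
    (d : Fin m → ℝ) (hd : ∀ i, 0 ≤ d i) (T : Finset (Fin m))
    (X : Set ((Fin n → ℝ) × (Fin m → ℝ)))
    (hX : ∀ p ∈ X, (∀ i, p.1 i = 0 ∨ p.1 i = 1) ∧ (∀ i, 0 ≤ p.2 i))
    (ρ : Fin n → ℝ)
    (hρ : ∀ k : Fin n, ρ k = 0 ∨ ∃ B : ℝ, 0 ≤ B ∧
      ρ k = Real.sqrt (c k + B) - Real.sqrt B ∧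
      ∀ p ∈ X, p.1 k = 1 →
        σ + ∑ i ∈ Finset.Iio k, c i * p.1 i + ∑ i ∈ T, d i * p.2 i ^ 2 ≤ B)
    (x : Fin n → ℝ) (y : Fin m → ℝ) (hxy : (x, y) ∈ X)
    (z : ℝ) (hz : 0 ≤ z)
    (hcon : σ + ∑ i, c i * x i + ∑ i, d i * y i ^ 2 ≤ z ^ 2) :
    (Real.sqrt (σ + ∑ i ∈ T, d i * y i ^ 2) + ∑ i, ρ i * x i) ^ 2
      + ∑ i ∈ Tᶜ, d i * y i ^ 2 ≤ z ^ 2 := by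
  obtain ⟨hx01', hy0'⟩ := hX _ hxy
  have hx01 : ∀ i, x i = 0 ∨ x i = 1 := hx01'
  have hy0 : ∀ i, 0 ≤ y i := hy0'
  set S : ℝ := σ + ∑ i ∈ T, d i * y i ^ 2 with hS
  have hSnn : 0 ≤ S := by
    have : 0 ≤ ∑ i ∈ T, d i * y i ^ 2 :=
      Finset.sum_nonneg fun i _ => mul_nonneg (hd i) (sq_nonneg _)
    linarith
  -- filter sets
  set F : ℕ → Finset (Fin n) := fun k => Finset.univ.filter (fun i => (i : ℕ) < k) with hF
  have hFsum : ∀ (k : ℕ) (f : Fin n → ℝ), 0 ≤ ∑ i ∈ F k, f i ∨ True := fun _ _ => Or.inr trivial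
  have hcx : ∀ (k : ℕ) (i : Fin n), 0 ≤ c i * x i := by
    intro k i
    rcases hx01 i with h | h <;> simp [h, hc i]
  have key : ∀ k : ℕ, Real.sqrt S + ∑ i ∈ F k, ρ i * x i
      ≤ Real.sqrt (S + ∑ i ∈ F k, c i * x i) := by
    intro k
    induction k with
    | zero => simp [hF]
    | succ k ih =>
      by_cases hk : k < n
      · set K : Fin n := ⟨k, hk⟩ with hK
        have hmem : K ∉ F k := by simp [hF, hK]
        have hins : F (k+1) = insert K (F k) := by
          ext i
          simp only [hF, Finset.mem_filter, Finset.mem_univ, true_and, Finset.mem_insert]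
          constructor
          · intro h
            rcases Nat.lt_succ_iff_lt_or_eq.mp h with h | h
            · exact Or.inr h
            · exact Or.inl (Fin.ext h)
          · rintro (rfl | h)
            · exact Nat.lt_succ_self _
            · exact Nat.lt_succ_of_lt h
        rw [hins, Finset.sum_insert hmem, Finset.sum_insert hmem]
        set u : ℝ := S + ∑ i ∈ F k, c i * x i with hu
        have hsum_nn : 0 ≤ ∑ i ∈ F k, c i * x i :=
          Finset.sum_nonneg fun i _ => hcx k i
        have hunn : 0 ≤ u := by linarith
        rcases hx01 K with h0 | h1
        · rw [h0]; simpa using ih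
        · rw [h1, mul_one, mul_one]
          have hstep : Real.sqrt u + ρ K ≤ Real.sqrt (c K + u) := by
            rcases hρ K with h | ⟨B, hB, hρK, hBbound⟩
            · rw [h, add_zero]
              exact Real.sqrt_le_sqrt (by linarith [hc K])
            · have hIio : Finset.Iio K = F k := by
                ext i
                simp [hF, Finset.mem_Iio, Fin.lt_def, hK]
              have hub : u ≤ B := by
                have := hBbound (x, y) hxy h1
                rw [hIio] at this
                simp only [hu, hS]; linarith
              have := sqrt_diff_anti_s13 u B (c K) hunn hub (hc K)
              rw [hρK]; linarith
          calc Real.sqrt S + (ρ K + ∑ i ∈ F k, ρ i * x i)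
              ≤ Real.sqrt u + ρ K := by linarith
            _ ≤ Real.sqrt (c K + u) := hstep
            _ = Real.sqrt (S + (c K + ∑ i ∈ F k, c i * x i)) := by
                rw [hu]; ring_nf
      · have heq : F (k+1) = F k := by
          ext i
          simp only [hF, Finset.mem_filter, Finset.mem_univ, true_and]
          have hi := i.isLt
          omega
        rw [heq]; exact ih
  have hFn : F n = Finset.univ := by
    ext i; simp [hF, i.isLt]
  have hmain : Real.sqrt S + ∑ i, ρ i * x i ≤ Real.sqrt (S + ∑ i, c i * x i) := by
    have := key n; rwa [hFn] at this
  have hρnn : ∀ i, 0 ≤ ρ i * x i := by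
    intro i
    rcases hx01 i with h | h
    · simp [h]
    · rw [h, mul_one]
      rcases hρ i with h' | ⟨B, hB, hρi, _⟩
      · exact le_of_eq h'.symm
      · rw [hρi]
        have : Real.sqrt B ≤ Real.sqrt (c i + B) :=
          Real.sqrt_le_sqrt (by linarith [hc i])
        linarith
  have hlhs_nn : 0 ≤ Real.sqrt S + ∑ i, ρ i * x i := by
    have : 0 ≤ ∑ i, ρ i * x i := Finset.sum_nonneg fun i _ => hρnn i
    have := Real.sqrt_nonneg S
    linarith
  have hsq : (Real.sqrt S + ∑ i, ρ i * x i) ^ 2 ≤ S + ∑ i, c i * x i := by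
    have hcsum : 0 ≤ ∑ i, c i * x i := Finset.sum_nonneg fun i _ => hcx 0 i
    calc (Real.sqrt S + ∑ i, ρ i * x i) ^ 2
        ≤ (Real.sqrt (S + ∑ i, c i * x i)) ^ 2 := by
          apply pow_le_pow_left₀ hlhs_nn hmain
      _ = S + ∑ i, c i * x i := Real.sq_sqrt (by linarith)
  have hsplit : ∑ i ∈ T, d i * y i ^ 2 + ∑ i ∈ Tᶜ, d i * y i ^ 2
      = ∑ i, d i * y i ^ 2 := Finset.sum_add_sum_compl T _
  linarith
end

section
/- For every (x, y) ∈ X and all reals w ≥ 0, z ≥ 0 with σ + ∑_{i=1}^n c_i x_i + ∑_{i=1}^m d_i y_i² ≤ 4wz, the strengthened rotated-cone polymatroid inequality holds: (√(σ + ∑_{i∈T} d_i y_i²) + ∑_{i=1}^n ρ_i x_i)² + ∑_{i∈{1,…,m}∖T} d_i y_i² ≤ 4wz. -/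
/-!
Write `s = σ + ∑_{i ∈ T} dᵢ yᵢ²`. The map `t ↦ √(c + t) - √t` is antitone on `t ≥ 0`, so each
coefficient `ρₖ = √(cₖ + Bₖ) - √Bₖ` is at most the actual increment
`√(cₖ + Pₖ) - √Pₖ` of the square root along the prefix sums `Pₖ = s + ∑_{i<k} cᵢ xᵢ ≤ Bₖ`.
Telescoping gives `√s + ∑ ρᵢ xᵢ ≤ √(s + ∑ cᵢ xᵢ)`; squaring and adding the terms outside `T`
yields the inequality.
-/

open Finset Real

theorem antitoneOn_sqrt_add_sub_sqrt {c : ℝ} (hc : 0 ≤ c) :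
    AntitoneOn (fun t => √(c + t) - √t) (Set.Ici 0) := by
  intro a (ha : 0 ≤ a) b (hb : 0 ≤ b) hab
  have hgap : √a ≤ √(c + a) := sqrt_le_sqrt (by linarith)
  have hroot : √a ≤ √b := sqrt_le_sqrt hab
  -- `c = 2u√a + u²` for `u = √(c + a) - √a`, and `2u√a ≤ 2u√b`.
  have : √(c + b) ≤ √(c + a) - √a + √b :=
    sqrt_le_iff.mpr ⟨by linarith [sqrt_nonneg b], by
      nlinarith [sq_sqrt (show 0 ≤ c + a by linarith), sq_sqrt ha, sq_sqrt hb,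
        mul_le_mul_of_nonneg_left hroot (sub_nonneg.mpr hgap)]⟩
  show √(c + b) - √b ≤ √(c + a) - √a
  linarith

theorem sqrt_add_sum_le_sqrt_add_sum {ι : Type*} [LinearOrder ι] [LocallyFiniteOrderBot ι]
    {s : ℝ} (hs : 0 ≤ s) {a r : ι → ℝ} (ha : ∀ i, 0 ≤ a i) (S : Finset ι)
    (hr : ∀ k ∈ S, r k ≤ √(a k + (s + ∑ i ∈ Iio k, a i)) - √(s + ∑ i ∈ Iio k, a i)) :
    √s + ∑ i ∈ S, r i ≤ √(s + ∑ i ∈ S, a i) := by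
  classical
  induction S using Finset.induction_on_max with
  | empty => simp
  | insert k S hlt ih =>
    rw [forall_mem_insert] at hr
    have hk : k ∉ S := fun h => lt_irrefl k (hlt k h)
    have hS : 0 ≤ s + ∑ i ∈ S, a i := add_nonneg hs (sum_nonneg fun i _ => ha i)
    have hprefix : s + ∑ i ∈ S, a i ≤ s + ∑ i ∈ Iio k, a i :=
      add_le_add_right (sum_le_sum_of_subset_of_nonneg (fun i hi => mem_Iio.mpr (hlt i hi))
        fun i _ _ => ha i) s
    have hincr : √(a k + (s + ∑ i ∈ Iio k, a i)) - √(s + ∑ i ∈ Iio k, a i) ≤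
        √(a k + (s + ∑ i ∈ S, a i)) - √(s + ∑ i ∈ S, a i) :=
      antitoneOn_sqrt_add_sub_sqrt (ha k) hS (Set.mem_Ici.mpr (hS.trans hprefix)) hprefix
    rw [sum_insert hk, sum_insert hk, add_left_comm s]
    linarith [ih hr.2, hr.1, hincr]

theorem strengthened_rotated_polymatroid_general
    (n m : ℕ) (σ : ℝ) (hσ : 0 ≤ σ) (c : Fin n → ℝ) (hc : ∀ i, 0 ≤ c i)
    (d : Fin m → ℝ) (hd : ∀ i, 0 ≤ d i) (T : Finset (Fin m))
    (X : Set ((Fin n → ℝ) × (Fin m → ℝ)))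
    (hX : ∀ p ∈ X, (∀ i, p.1 i = 0 ∨ p.1 i = 1) ∧ (∀ i, 0 ≤ p.2 i))
    (ρ : Fin n → ℝ)
    (hρ : ∀ k : Fin n, ρ k = 0 ∨ ∃ B : ℝ, 0 ≤ B ∧
      ρ k = Real.sqrt (c k + B) - Real.sqrt B ∧
      ∀ p ∈ X, p.1 k = 1 →
        σ + ∑ i ∈ Finset.Iio k, c i * p.1 i + ∑ i ∈ T, d i * p.2 i ^ 2 ≤ B)
    (x : Fin n → ℝ) (y : Fin m → ℝ) (hxy : (x, y) ∈ X)
    (w z : ℝ)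
    (hcon : σ + ∑ i, c i * x i + ∑ i, d i * y i ^ 2 ≤ 4 * w * z) :
    (Real.sqrt (σ + ∑ i ∈ T, d i * y i ^ 2) + ∑ i, ρ i * x i) ^ 2
      + ∑ i ∈ Tᶜ, d i * y i ^ 2 ≤ 4 * w * z := by
  have hx : ∀ i, x i = 0 ∨ x i = 1 := (hX (x, y) hxy).1
  set s := σ + ∑ i ∈ T, d i * y i ^ 2
  have hs : 0 ≤ s := add_nonneg hσ (sum_nonneg fun i _ => mul_nonneg (hd i) (sq_nonneg _))
  have hcx : ∀ i, 0 ≤ c i * x i := fun i => by rcases hx i with h | h <;> simp [h, hc i]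
  have hρx : ∀ k, 0 ≤ ρ k * x k := by
    intro k
    rcases hx k with h | h
    · simp [h]
    rcases hρ k with hk | ⟨B, -, hk, -⟩
    · simp [hk]
    · simpa [h, hk] using sqrt_le_sqrt (le_add_of_nonneg_left (hc k))
  have hincr : ∀ k, ρ k * x k ≤
      √(c k * x k + (s + ∑ i ∈ Iio k, c i * x i)) - √(s + ∑ i ∈ Iio k, c i * x i) := by
    intro k
    have hP : 0 ≤ s + ∑ i ∈ Iio k, c i * x i := add_nonneg hs (sum_nonneg fun i _ => hcx i)
    rcases hx k with h | h
    · simp [h]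
    rcases hρ k with hk | ⟨B, hB, hk, hBX⟩
    · simpa [h, hk] using sqrt_le_sqrt (le_add_of_nonneg_left (hc k))
    · have hPB : s + ∑ i ∈ Iio k, c i * x i ≤ B := by linarith [hBX (x, y) hxy h]
      simpa [h, hk] using antitoneOn_sqrt_add_sub_sqrt (hc k) hP (Set.mem_Ici.mpr hB) hPB
  have hbound : √s + ∑ i, ρ i * x i ≤ √(s + ∑ i, c i * x i) :=
    sqrt_add_sum_le_sqrt_add_sum hs hcx univ fun k _ => hincr k
  have hsq : (√s + ∑ i, ρ i * x i) ^ 2 ≤ s + ∑ i, c i * x i :=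
    (le_sqrt (add_nonneg (sqrt_nonneg s) (sum_nonneg fun i _ => hρx i))
      (add_nonneg hs (sum_nonneg fun i _ => hcx i))).mp hbound
  linarith [sum_add_sum_compl T fun i => d i * y i ^ 2]

/-- For every (x, y) ∈ X and all w ≥ 0, z ≥ 0 with
σ + ∑ cᵢ xᵢ + ∑ dᵢ yᵢ² ≤ 4wz, the strengthened rotated-cone polymatroid inequality holds:
(√(σ + ∑_{i∈T} dᵢ yᵢ²) + ∑ ρᵢ xᵢ)² + ∑_{i∉T} dᵢ yᵢ² ≤ 4wz. -/
theorem strengthened_rotated_polymatroid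
    (n m : ℕ) (σ : ℝ) (hσ : 0 ≤ σ) (c : Fin n → ℝ) (hc : ∀ i, 0 ≤ c i)
    (d : Fin m → ℝ) (hd : ∀ i, 0 ≤ d i) (T : Finset (Fin m))
    (X : Set ((Fin n → ℝ) × (Fin m → ℝ)))
    (hX : ∀ p ∈ X, (∀ i, p.1 i = 0 ∨ p.1 i = 1) ∧ (∀ i, 0 ≤ p.2 i))
    (ρ : Fin n → ℝ)
    (hρ : ∀ k : Fin n, ρ k = 0 ∨ ∃ B : ℝ, 0 ≤ B ∧
      ρ k = Real.sqrt (c k + B) - Real.sqrt B ∧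
      ∀ p ∈ X, p.1 k = 1 →
        σ + ∑ i ∈ Finset.Iio k, c i * p.1 i + ∑ i ∈ T, d i * p.2 i ^ 2 ≤ B)
    (x : Fin n → ℝ) (y : Fin m → ℝ) (hxy : (x, y) ∈ X)
    (w z : ℝ) (hw : 0 ≤ w) (hz : 0 ≤ z)
    (hcon : σ + ∑ i, c i * x i + ∑ i, d i * y i ^ 2 ≤ 4 * w * z) :
    (Real.sqrt (σ + ∑ i ∈ T, d i * y i ^ 2) + ∑ i, ρ i * x i) ^ 2
      + ∑ i ∈ Tᶜ, d i * y i ^ 2 ≤ 4 * w * z :=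
  strengthened_rotated_polymatroid_general n m σ hσ c hc d hd T X hX ρ hρ x y hxy w z hcon
end

section
/- Let Q be an n×n real symmetric positive semidefinite matrix and c ∈ ℝ^n with c_i ≥ 0 for all i, such that Q − diag(c) is positive semidefinite. Then for every x ∈ ℝ^n with x_i ∈ {0,1} for all i and every real z ≥ 0, one has √(xᵀQx) ≤ z if and only if there exists a real y ≥ 0 with xᵀ(Q − diag(c))x ≤ y² and ∑_{i=1}^n c_i x_i + y² ≤ z². -/
/-! Since `xᵢ² = xᵢ` for binary `x`, the quadratic form splits as
`xᵀQx = xᵀ(Q - diag c)x + ∑ cᵢxᵢ` with a nonnegative first summand, and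
`y = √(xᵀ(Q - diag c)x)` witnesses the forward direction. -/

open Matrix

theorem Matrix.dotProduct_diagonal_mulVec_of_isIdempotentElem {ι R : Type*} [Fintype ι]
    [DecidableEq ι] [CommSemiring R] (c x : ι → R) (hx : ∀ i, IsIdempotentElem (x i)) :
    x ⬝ᵥ (diagonal c *ᵥ x) = ∑ i, c i * x i := by
  simp only [dotProduct, mulVec_diagonal]
  refine Finset.sum_congr rfl fun i _ => ?_
  rw [mul_left_comm, (hx i).eq]

theorem Real.sqrt_add_le_iff_exists_sq {a b z : ℝ} (ha : 0 ≤ a) (hz : 0 ≤ z) :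
    √(a + b) ≤ z ↔ ∃ y, 0 ≤ y ∧ a ≤ y ^ 2 ∧ b + y ^ 2 ≤ z ^ 2 := by
  rw [Real.sqrt_le_iff, and_iff_right hz]
  constructor
  · intro h
    exact ⟨√a, Real.sqrt_nonneg a, (Real.sq_sqrt ha).ge, by rw [Real.sq_sqrt ha]; linarith⟩
  · rintro ⟨y, -, hay, hby⟩
    linarith

theorem diagonal_extraction_equivalence_general
    (n : ℕ) (Q : Matrix (Fin n) (Fin n) ℝ)
    (c : Fin n → ℝ)
    (hQc : (Q - Matrix.diagonal c).PosSemidef)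
    (x : Fin n → ℝ) (hx : ∀ i, x i = 0 ∨ x i = 1) (z : ℝ) (hz : 0 ≤ z) :
    Real.sqrt (x ⬝ᵥ (Q *ᵥ x)) ≤ z ↔
      ∃ y : ℝ, 0 ≤ y ∧ x ⬝ᵥ ((Q - Matrix.diagonal c) *ᵥ x) ≤ y ^ 2 ∧
        ∑ i, c i * x i + y ^ 2 ≤ z ^ 2 := by
  have hx_idem : ∀ i, IsIdempotentElem (x i) := fun i => by
    rcases hx i with h | h <;> rw [h]
    exacts [IsIdempotentElem.zero, IsIdempotentElem.one]
  have hsplit : x ⬝ᵥ (Q *ᵥ x) = x ⬝ᵥ ((Q - diagonal c) *ᵥ x) + ∑ i, c i * x i := by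
    rw [sub_mulVec, dotProduct_sub, dotProduct_diagonal_mulVec_of_isIdempotentElem c x hx_idem,
      sub_add_cancel]
  have hnonneg : 0 ≤ x ⬝ᵥ ((Q - diagonal c) *ᵥ x) := by
    simpa using hQc.dotProduct_mulVec_nonneg x
  rw [hsplit]
  exact Real.sqrt_add_le_iff_exists_sq hnonneg hz

/-- For Q ⪰ 0 symmetric, c ≥ 0 with Q − diag(c) ⪰ 0, binary x, and z ≥ 0:
√(xᵀQx) ≤ z ↔ ∃ y ≥ 0 with xᵀ(Q − diag(c))x ≤ y² and ∑ cᵢ xᵢ + y² ≤ z². -/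
theorem diagonal_extraction_equivalence
    (n : ℕ) (Q : Matrix (Fin n) (Fin n) ℝ) (hQ : Q.PosSemidef)
    (c : Fin n → ℝ) (hc : ∀ i, 0 ≤ c i)
    (hQc : (Q - Matrix.diagonal c).PosSemidef)
    (x : Fin n → ℝ) (hx : ∀ i, x i = 0 ∨ x i = 1) (z : ℝ) (hz : 0 ≤ z) :
    Real.sqrt (x ⬝ᵥ (Q *ᵥ x)) ≤ z ↔
      ∃ y : ℝ, 0 ≤ y ∧ x ⬝ᵥ ((Q - Matrix.diagonal c) *ᵥ x) ≤ y ^ 2 ∧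
        ∑ i, c i * x i + y ^ 2 ≤ z ^ 2 :=
  diagonal_extraction_equivalence_general n Q c hQc x hx z hz
end

section
/- Let b ∈ ℝ^m with b_i > 0 for all i, let β = ∑_{i=1}^m b_i², assume β < 1, and let s ≥ 0. Then for every y ∈ ℝ^m with y_i ≥ 0 for all i, one has −∑_{i=1}^m b_i y_i + √(s² + ∑_{i=1}^m y_i²) ≥ s·√(1−β); moreover, equality holds at the point y given by y_i = s·b_i / √(1−β). Consequently the infimum of −∑ b_i y_i + √(s² + ∑ y_i²) over the nonnegative orthant equals s·√(1−β). -/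
/-- With bᵢ > 0, β = ∑ bᵢ² < 1 and s ≥ 0: for every y ≥ 0,
−∑ bᵢ yᵢ + √(s² + ∑ yᵢ²) ≥ s√(1−β); equality holds at yᵢ = s bᵢ / √(1−β); and the
infimum over the nonnegative orthant equals s√(1−β). -/
theorem inf_over_orthant_beta_lt_one
    (m : ℕ) (hm : 0 < m) (b : Fin m → ℝ) (hb : ∀ i, 0 < b i)
    (hβ : ∑ i, b i ^ 2 < 1) (s : ℝ) (hs : 0 ≤ s) :
    (∀ y : Fin m → ℝ, (∀ i, 0 ≤ y i) →
        s * Real.sqrt (1 - ∑ i, b i ^ 2) ≤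
          -(∑ i, b i * y i) + Real.sqrt (s ^ 2 + ∑ i, y i ^ 2)) ∧
    (-(∑ i, b i * (s * b i / Real.sqrt (1 - ∑ j, b j ^ 2))) +
        Real.sqrt (s ^ 2 + ∑ i, (s * b i / Real.sqrt (1 - ∑ j, b j ^ 2)) ^ 2) =
      s * Real.sqrt (1 - ∑ i, b i ^ 2)) ∧
    sInf {v : ℝ | ∃ y : Fin m → ℝ, (∀ i, 0 ≤ y i) ∧
        v = -(∑ i, b i * y i) + Real.sqrt (s ^ 2 + ∑ i, y i ^ 2)} =
      s * Real.sqrt (1 - ∑ i, b i ^ 2) := by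
  set β := ∑ i, b i ^ 2 with hβdef
  have hβ0 : 0 ≤ β := Finset.sum_nonneg fun i _ => sq_nonneg _
  have h1β : 0 < 1 - β := by linarith
  set c := Real.sqrt (1 - β) with hcdef
  have hc : 0 < c := Real.sqrt_pos.2 h1β
  have hc2 : c ^ 2 = 1 - β := Real.sq_sqrt h1β.le
  -- main inequality
  have key : ∀ y : Fin m → ℝ, (∀ i, 0 ≤ y i) →
      s * c ≤ -(∑ i, b i * y i) + Real.sqrt (s ^ 2 + ∑ i, y i ^ 2) := by
    intro y hy
    set T := Real.sqrt (∑ i, y i ^ 2) with hTdef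
    have hT0 : 0 ≤ T := Real.sqrt_nonneg _
    have hT2 : T ^ 2 = ∑ i, y i ^ 2 :=
      Real.sq_sqrt (Finset.sum_nonneg fun i _ => sq_nonneg _)
    have hB : Real.sqrt β ^ 2 = β := Real.sq_sqrt hβ0
    have hB0 : 0 ≤ Real.sqrt β := Real.sqrt_nonneg _
    have h1 : ∑ i, b i * y i ≤ Real.sqrt β * T := by
      simpa using Real.sum_mul_le_sqrt_mul_sqrt Finset.univ b y
    have h2 : Real.sqrt β * T + c * s ≤ Real.sqrt (s ^ 2 + T ^ 2) := by
      rw [show s ^ 2 + T ^ 2 = (Real.sqrt β * T + c * s) ^ 2 + (c * T - Real.sqrt β * s) ^ 2 by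
        nlinarith [hB, hc2]]
      calc Real.sqrt β * T + c * s ≤ Real.sqrt ((Real.sqrt β * T + c * s) ^ 2) := by
            rw [Real.sqrt_sq (by positivity)]
          _ ≤ _ := Real.sqrt_le_sqrt (by nlinarith [sq_nonneg (c * T - Real.sqrt β * s)])
    rw [← hT2]
    nlinarith [h1, h2]
  -- equality point
  have hsum1 : ∑ i, b i * (s * b i / c) = s * β / c := by
    calc ∑ i, b i * (s * b i / c) = ∑ i, s * b i ^ 2 / c :=
          Finset.sum_congr rfl fun i _ => by ring
      _ = s * β / c := by rw [← Finset.sum_div, ← Finset.mul_sum]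
  have hsum2 : ∑ i, (s * b i / c) ^ 2 = s ^ 2 * β / c ^ 2 := by
    calc ∑ i, (s * b i / c) ^ 2 = ∑ i, s ^ 2 * b i ^ 2 / c ^ 2 :=
          Finset.sum_congr rfl fun i _ => by ring
      _ = s ^ 2 * β / c ^ 2 := by rw [← Finset.sum_div, ← Finset.mul_sum]
  have heq : -(∑ i, b i * (s * b i / c)) +
      Real.sqrt (s ^ 2 + ∑ i, (s * b i / c) ^ 2) = s * c := by
    rw [hsum1, hsum2]
    have : s ^ 2 + s ^ 2 * β / c ^ 2 = (s / c) ^ 2 := by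
      field_simp; nlinarith [hc2]
    rw [this, Real.sqrt_sq (by positivity)]
    have h2 : -(s * β / c) + s / c = s * (1 - β) / c := by ring
    rw [h2, ← hc2, sq, mul_div_assoc, mul_div_cancel_left₀ _ hc.ne']
  refine ⟨key, heq, ?_⟩
  apply le_antisymm
  · apply csInf_le
    · exact ⟨s * c, by rintro v ⟨y, hy, rfl⟩; exact key y hy⟩
    · exact ⟨fun i => s * b i / c,
        fun i => div_nonneg (mul_nonneg hs (hb i).le) hc.le, heq.symm⟩
  · have hmem : s * c ∈ {v : ℝ | ∃ y : Fin m → ℝ, (∀ i, 0 ≤ y i) ∧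
        v = -(∑ i, b i * y i) + Real.sqrt (s ^ 2 + ∑ i, y i ^ 2)} :=
      ⟨fun i => s * b i / c,
        fun i => div_nonneg (mul_nonneg hs (hb i).le) hc.le, heq.symm⟩
    exact le_csInf ⟨_, hmem⟩ (by rintro v ⟨y, hy, rfl⟩; exact key y hy)
end
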